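/- arXiv:1412.0397 — 6 statements merged into one kernel-verified Lean document; each statement's English description precedes it below -/
import Mathlib

section
/- Semiconjugacy is an equivalence relation on R_G, the set of homomorphisms from a group G into the group of orientation-preserving homeomorphisms of the circle. -/
noncomputable section

/-- The circle `ℝ/ℤ`. -/
abbrev S1 := AddCircle (1 : ℝ)

instance : Group (S1 ≃ₜ S1) where
  mul f g := g.trans f
  one := Homeomorph.refl _
  inv := Homeomorph.symm
  mul_assoc _ _ _ := rfl
  one_mul f := Homeomorph.ext fun _ => rfl
  mul_one f := Homeomorph.ext fun _ => rfl
  inv_mul_cancel f := Homeomorph.ext fun x => f.symm_apply_apply x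

/-- `f` is an orientation preserving homeomorphism of the circle: it admits a strictly
monotone lift to `ℝ` commuting with the translation by one. -/
def IsOP (f : S1 ≃ₜ S1) : Prop :=
  ∃ F : ℝ → ℝ, StrictMono F ∧ (∀ x, F (x + 1) = F x + 1) ∧
    ∀ x : ℝ, ((F x : S1)) = f (x : S1)

/-- `R_G`: homomorphisms from `G` to `Homeo₊(S¹)`. -/
structure RGp (G : Type) [Group G] where
  toFun : G →* (S1 ≃ₜ S1)
  op : ∀ g, IsOP (toFun g)

/-- A degree one monotone (not necessarily continuous) self map of the circle. -/
def DegOneMonotone (h : S1 → S1) : Prop :=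
  ∃ H : ℝ → ℝ, Monotone H ∧ (∀ x, H (x + 1) = H x + 1) ∧
    ∀ x : ℝ, ((H x : S1)) = h (x : S1)

/-- Membership in `R_G*`: the action has a global fixed point. -/
def HasGlobalFix {G : Type} [Group G] (φ : RGp G) : Prop := ∃ x : S1, ∀ g, φ.toFun g x = x

/-- Semiconjugacy of two circle actions. -/
def Semiconj {G : Type} [Group G] (φ₁ φ₂ : RGp G) : Prop :=
  (HasGlobalFix φ₁ ∧ HasGlobalFix φ₂) ∨
  (¬ HasGlobalFix φ₁ ∧ ¬ HasGlobalFix φ₂ ∧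
    ∃ h : S1 → S1, DegOneMonotone h ∧ ∀ g x, φ₂.toFun g (h x) = h (φ₁.toFun g x))

/-! Reflexivity and transitivity come from the identity and from composition. For symmetry, take
a monotone degree one lift `f` of `h` and lifts `E₁`, `E₂` of `φ₁ g`, `φ₂ g`, so that
`f ∘ E₁ - E₂ ∘ f` is integer valued. If `h` is constant, its value is a global fixed point of
`φ₂`; otherwise `f` has no jump of size `≥ 1`, which makes this integer locally constant, hence
constant. The generalized inverse `y ↦ sSup {x | f x ≤ y}` of `f` then intertwines `E₂` and `E₁`
up to that integer, so it descends to a semiconjugacy from `φ₂` to `φ₁`. -/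

open Set Filter Topology

theorem coe_eq_coe_iff_exists_int {a b : ℝ} : (a : S1) = b ↔ ∃ n : ℤ, a = b + n := by
  rw [← sub_eq_zero, ← AddCircle.coe_sub, AddCircle.coe_eq_zero_iff]
  simp only [zsmul_eq_mul, mul_one]
  constructor <;> rintro ⟨n, hn⟩ <;> exact ⟨n, by linarith⟩

theorem coe_add_intCast (a : ℝ) (n : ℤ) : ((a + n : ℝ) : S1) = a :=
  coe_eq_coe_iff_exists_int.mpr ⟨n, rfl⟩

theorem csSup_setOf_le_conj {α β : Type*} [ConditionallyCompleteLattice α] [Preorder β]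
    {f : α → β} (a : α ≃o α) (b : β ≃o β) (h : ∀ x, f (a x) = b (f x)) {y : β}
    (hne : {x | f x ≤ y}.Nonempty) (hbdd : BddAbove {x | f x ≤ y}) :
    sSup {x | f x ≤ b y} = a (sSup {x | f x ≤ y}) := by
  have : {x | f x ≤ b y} = a '' {x | f x ≤ y} := by
    ext x
    rw [a.image_eq_preimage_symm]
    show f x ≤ b y ↔ f (a.symm x) ≤ y
    rw [← b.le_iff_le (x := f (a.symm x)), ← h, a.apply_symm_apply]
  rw [this, a.map_csSup' hne hbdd]

theorem OrderIso.abs_sub_lt_one {b : ℝ ≃o ℝ} (hb : ∀ x, b (x + 1) = b x + 1) {u v : ℝ}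
    (h : |u - v| < 1) : |b u - b v| < 1 := by
  wlog huv : v ≤ u generalizing u v
  · rw [abs_sub_comm] at h ⊢
    exact this h (le_of_not_ge huv)
  have hlt : b u < b v + 1 := hb v ▸ b.strictMono (by linarith [(abs_lt.mp h).2])
  rw [abs_of_nonneg (sub_nonneg.mpr (b.monotone huv))]
  linarith

theorem IsOP.exists_orderIso {f : S1 ≃ₜ S1} (hf : IsOP f) :
    ∃ E : ℝ ≃o ℝ, (∀ x, E (x + 1) = E x + 1) ∧ ∀ x : ℝ, (E x : S1) = f x := by
  obtain ⟨F, hF, hF1, hFf⟩ := hf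
  let F' : CircleDeg1Lift := ⟨⟨F, hF.monotone⟩, hF1⟩
  have hsurj : Function.Surjective F := by
    intro y
    obtain ⟨x, hx⟩ := f.surjective y
    obtain ⟨x, rfl⟩ := QuotientAddGroup.mk_surjective x
    obtain ⟨n, hn⟩ := coe_eq_coe_iff_exists_int.mp ((hFf x).trans hx)
    exact ⟨x - n, (F'.map_sub_int x n).trans (sub_eq_of_eq_add hn)⟩
  exact ⟨hF.orderIsoOfSurjective F hsurj, hF1, hFf⟩

theorem DegOneMonotone.exists_circleDeg1Lift {h : S1 → S1} (hh : DegOneMonotone h) :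
    ∃ f : CircleDeg1Lift, ∀ x : ℝ, (f x : S1) = h x := by
  obtain ⟨H, hm, h1, hH⟩ := hh
  exact ⟨⟨⟨H, hm⟩, h1⟩, hH⟩

theorem DegOneMonotone.comp {h₁ h₂ : S1 → S1} (hh₂ : DegOneMonotone h₂)
    (hh₁ : DegOneMonotone h₁) : DegOneMonotone (h₂ ∘ h₁) := by
  obtain ⟨H₁, hm₁, h₁1, hH₁⟩ := hh₁
  obtain ⟨H₂, hm₂, h₂1, hH₂⟩ := hh₂
  exact ⟨H₂ ∘ H₁, hm₂.comp hm₁, fun x => by simp only [Function.comp_apply, h₁1, h₂1],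
    fun x => by simp only [Function.comp_apply, hH₁, hH₂]⟩

namespace CircleDeg1Lift

variable (f : CircleDeg1Lift)

theorem periodic_coe_comp : Function.Periodic (fun x => (f x : S1)) 1 := fun x => by
  simpa only [map_add_one, Int.cast_one] using coe_add_intCast (f x) 1

def circleMap : S1 → S1 := f.periodic_coe_comp.lift

theorem circleMap_coe (x : ℝ) : f.circleMap x = f x := rfl

theorem degOneMonotone_circleMap : DegOneMonotone f.circleMap :=
  ⟨f, f.monotone, f.map_add_one, fun _ => rfl⟩

theorem coe_apply_eq_of_forall_mem {I : Set ℝ} (hI : ∀ t : ℝ, ∃ n : ℤ, t + n ∈ I) {c : ℝ}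
    (hc : ∀ t ∈ I, f t = c) (t : ℝ) : (f t : S1) = c := by
  obtain ⟨n, hn⟩ := hI t
  rw [← hc _ hn, map_add_int, coe_add_intCast]

theorem eventually_abs_sub_lt_one (hf : ∀ c : S1, ∃ t : ℝ, (f t : S1) ≠ c) (x : ℝ) :
    ∀ᶠ t in 𝓝 x, |f t - f x| < 1 := by
  obtain ⟨u, hxu, hu⟩ : ∃ u > x, f u < f x + 1 := by
    by_contra! hjump
    obtain ⟨t, ht⟩ := hf ((f x + 1 : ℝ) : S1)
    refine ht (f.coe_apply_eq_of_forall_mem (I := Ioc x (x + 1)) (fun t => ?_)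
      (fun s hs => le_antisymm ?_ (hjump s hs.1)) t)
    · obtain ⟨n, hn, -⟩ := existsUnique_add_zsmul_mem_Ioc one_pos t x
      exact ⟨n, by simpa only [zsmul_eq_mul, mul_one] using hn⟩
    · simpa only [map_add_one] using f.monotone hs.2
  obtain ⟨l, hlx, hl⟩ : ∃ l < x, f x - 1 < f l := by
    by_contra! hjump
    obtain ⟨t, ht⟩ := hf ((f x - 1 : ℝ) : S1)
    refine ht (f.coe_apply_eq_of_forall_mem (I := Ico (x - 1) x) (fun t => ?_)
      (fun s hs => le_antisymm (hjump s hs.2) ?_) t)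
    · obtain ⟨n, hn, -⟩ := existsUnique_add_zsmul_mem_Ico one_pos t (x - 1)
      exact ⟨n, by simpa only [zsmul_eq_mul, mul_one, sub_add_cancel] using hn⟩
    · linarith [f.monotone hs.1, sub_add_cancel x 1 ▸ f.map_add_one (x - 1)]
  filter_upwards [Ioo_mem_nhds hlx hxu] with t ht
  rw [abs_sub_lt_iff]
  constructor <;> linarith [f.monotone ht.1.le, f.monotone ht.2.le]

theorem exists_int_forall_apply_eq_add (hf : ∀ c : S1, ∃ t : ℝ, (f t : S1) ≠ c)
    (a b : ℝ ≃o ℝ) (hb : ∀ x, b (x + 1) = b x + 1) (hint : ∀ x, ∃ n : ℤ, f (a x) = b (f x) + n) :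
    ∃ n : ℤ, ∀ x, f (a x) = b (f x) + n := by
  choose n hn using hint
  have hloc : IsLocallyConstant n := by
    rw [IsLocallyConstant.iff_eventually_eq]
    intro x
    filter_upwards [(a.continuous.tendsto x).eventually (f.eventually_abs_sub_lt_one hf (a x)),
      f.eventually_abs_sub_lt_one hf x] with t hat ht
    have hbt := OrderIso.abs_sub_lt_one hb ht
    -- both increments have the sign of `t - x` and size less than one
    have hsub : |((n t - n x : ℤ) : ℝ)| < 1 := by
      have hdiff : ((n t - n x : ℤ) : ℝ) = (f (a t) - f (a x)) - (b (f t) - b (f x)) := by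
        push_cast; linarith [hn t, hn x]
      rw [hdiff, abs_lt]
      rw [abs_lt] at hat hbt
      rcases le_total t x with htx | hxt
      · have := f.monotone (a.monotone htx); have := b.monotone (f.monotone htx)
        constructor <;> linarith
      · have := f.monotone (a.monotone hxt); have := b.monotone (f.monotone hxt)
        constructor <;> linarith
    exact sub_eq_zero.mp (Int.abs_lt_one_iff.mp (by exact_mod_cast hsub))
  exact ⟨n 0, fun x => by rw [hn x, hloc.apply_eq_of_preconnectedSpace x 0]⟩

theorem nonempty_setOf_le (y : ℝ) : {x | f x ≤ y}.Nonempty :=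
  ⟨y - f 0 - 1, show f _ ≤ y by
    linarith [f.map_le_of_map_zero (y - f 0 - 1), Int.ceil_lt_add_one (y - f 0 - 1)]⟩

theorem bddAbove_setOf_le (y : ℝ) : BddAbove {x | f x ≤ y} :=
  ⟨y - f 0 + 1, fun x (hx : f x ≤ y) => by
    linarith [f.le_map_of_map_zero x, Int.lt_floor_add_one x]⟩

def upperInv : CircleDeg1Lift where
  toFun y := sSup {x | f x ≤ y}
  monotone' _ _ hy :=
    csSup_le_csSup (f.bddAbove_setOf_le _) (f.nonempty_setOf_le _) fun _ hx => le_trans hx hy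
  map_add_one' y := csSup_setOf_le_conj (OrderIso.addRight 1) (OrderIso.addRight 1) f.map_add_one
    (f.nonempty_setOf_le y) (f.bddAbove_setOf_le y)

theorem upperInv_apply_conj (a b : ℝ ≃o ℝ) (h : ∀ x, f (a x) = b (f x)) (y : ℝ) :
    f.upperInv (b y) = a (f.upperInv y) :=
  csSup_setOf_le_conj a b h (f.nonempty_setOf_le y) (f.bddAbove_setOf_le y)

end CircleDeg1Lift

section

variable {G : Type} [Group G]

theorem exists_degOneMonotone_semiconj_symm {φ₁ φ₂ : RGp G} (hφ₂ : ¬ HasGlobalFix φ₂)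
    {h : S1 → S1} (hh : DegOneMonotone h) (hφ : ∀ g x, φ₂.toFun g (h x) = h (φ₁.toFun g x)) :
    ∃ h' : S1 → S1, DegOneMonotone h' ∧ ∀ g x, φ₁.toFun g (h' x) = h' (φ₂.toFun g x) := by
  obtain ⟨f, hfh⟩ := hh.exists_circleDeg1Lift
  have hf : ∀ c : S1, ∃ t : ℝ, (f t : S1) ≠ c := by
    intro c
    by_contra! hc
    have hconst : ∀ z, h z = c := fun z => by
      obtain ⟨t, rfl⟩ := QuotientAddGroup.mk_surjective z
      rw [← hfh, hc]
    exact hφ₂ ⟨c, fun g => by rw [← hconst 0, hφ, hconst, hconst]⟩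
  refine ⟨f.upperInv.circleMap, f.upperInv.degOneMonotone_circleMap, fun g z => ?_⟩
  obtain ⟨E₁, -, hE₁⟩ := (φ₁.op g).exists_orderIso
  obtain ⟨E₂, hE₂1, hE₂⟩ := (φ₂.op g).exists_orderIso
  have hint : ∀ x, ∃ n : ℤ, f (E₁ x) = E₂ (f x) + n := fun x =>
    coe_eq_coe_iff_exists_int.mp (by rw [hfh, hE₁, ← hφ, ← hfh, hE₂])
  obtain ⟨n, hn⟩ := f.exists_int_forall_apply_eq_add hf E₁ E₂ hE₂1 hint
  have hconj : ∀ y, E₁ (f.upperInv y) = f.upperInv (E₂ y) + n := fun y => by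
    rw [← CircleDeg1Lift.map_add_int]
    exact (f.upperInv_apply_conj E₁ (E₂.trans (OrderIso.addRight (n : ℝ))) hn y).symm
  obtain ⟨y, rfl⟩ := QuotientAddGroup.mk_surjective z
  rw [CircleDeg1Lift.circleMap_coe, ← hE₁, hconj, coe_add_intCast, ← hE₂,
    CircleDeg1Lift.circleMap_coe]

theorem Semiconj.refl (φ : RGp G) : Semiconj φ φ := by
  by_cases hφ : HasGlobalFix φ
  · exact Or.inl ⟨hφ, hφ⟩
  · exact Or.inr ⟨hφ, hφ, id, ⟨id, monotone_id, fun _ => rfl, fun _ => rfl⟩, fun _ _ => rfl⟩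

theorem Semiconj.symm {φ₁ φ₂ : RGp G} : Semiconj φ₁ φ₂ → Semiconj φ₂ φ₁
  | .inl ⟨hφ₁, hφ₂⟩ => .inl ⟨hφ₂, hφ₁⟩
  | .inr ⟨hφ₁, hφ₂, _, hh, hφ⟩ =>
    .inr ⟨hφ₂, hφ₁, exists_degOneMonotone_semiconj_symm hφ₂ hh hφ⟩

theorem Semiconj.trans {φ₁ φ₂ φ₃ : RGp G} :
    Semiconj φ₁ φ₂ → Semiconj φ₂ φ₃ → Semiconj φ₁ φ₃
  | .inl ⟨hφ₁, _⟩, .inl ⟨_, hφ₃⟩ => .inl ⟨hφ₁, hφ₃⟩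
  | .inl ⟨_, hφ₂⟩, .inr ⟨hφ₂', _⟩ => absurd hφ₂ hφ₂'
  | .inr ⟨_, hφ₂, _⟩, .inl ⟨hφ₂', _⟩ => absurd hφ₂' hφ₂
  | .inr ⟨hφ₁, _, h, hh, hφ⟩, .inr ⟨_, hφ₃, h', hh', hφ'⟩ =>
    .inr ⟨hφ₁, hφ₃, h' ∘ h, hh'.comp hh, fun g x => by simp only [Function.comp_apply, hφ, hφ']⟩

end

/-- Semiconjugacy is an equivalence relation on `R_G`. -/
theorem semiconjugacy_equivalence (G : Type) [Group G] :
    Equivalence (fun φ₁ φ₂ : RGp G => Semiconj φ₁ φ₂) :=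
  ⟨Semiconj.refl, Semiconj.symm, Semiconj.trans⟩
end
end

section
/- Let φ¹, φ² ∈ R_G and for i = 1,2 let F^i ⊂ S¹ be a φ^i(G)-invariant subset. If there is a cyclic-order-preserving bijection ξ : F¹ → F² that is (φ¹,φ²)-equivariant, i.e. ξ∘φ¹(g) = φ²(g)∘ξ on F¹ for all g ∈ G, then φ¹ and φ² are semiconjugate. -/
noncomputable section

/-- Cyclic (weak) betweenness on the circle: `y` lies on the positively oriented
closed arc from `x` to `z`. -/
def CBtw (x y z : S1) : Prop :=
  ∃ a b c : ℝ, (a : S1) = x ∧ (b : S1) = y ∧ (c : S1) = z ∧ a ≤ b ∧ b ≤ c ∧ c ≤ a + 1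

/-- Strict cyclic betweenness on the circle. -/
def CSBtw (x y z : S1) : Prop :=
  ∃ a b c : ℝ, (a : S1) = x ∧ (b : S1) = y ∧ (c : S1) = z ∧ a < b ∧ b < c ∧ c < a + 1

/-- `ξ` preserves the cyclic order on `F`. -/
def COPOn (ξ : S1 → S1) (F : Set S1) : Prop :=
  ∀ x ∈ F, ∀ y ∈ F, ∀ z ∈ F, CSBtw x y z → CSBtw (ξ x) (ξ y) (ξ z)

/-- The closed arc `[x,y]` from `x` to `y` (positively oriented). -/
def arcCC (x y : S1) : Set S1 := {z | CBtw x z y}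

/-!
A cyclic-order-preserving `ξ` has a lift `X : ℝ → ℝ` commuting with `x ↦ x + 1` and monotone on
the preimage `L` of `F₁`. For each `g`, `X ∘ φ₁.lift g` and `φ₂.lift g ∘ X` are two such lifts of
the injective map `ξ ∘ φ₁ g = φ₂ g ∘ ξ`, so they differ by an integer, which can be absorbed into
the lift of `φ₂ g`. The extension `H x = sup X(L ∩ (-∞, x])` is monotone, commutes with `x ↦ x + 1`
and keeps these intertwinings, so it descends to a degree one monotone semiconjugacy from `φ₁` to
`φ₂`. The same construction for `ξ⁻¹` semiconjugates `φ₂` to `φ₁`, and semiconjugacies carry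
global fixed points along, so `φ₁` and `φ₂` lie in `R_G*` together.
-/

open Set

namespace S1

lemma coe_eq_coe_iff {a b : ℝ} : (a : S1) = b ↔ ∃ k : ℤ, b = a + k := by
  rw [eq_comm, ← sub_eq_zero, ← AddCircle.coe_sub, AddCircle.coe_eq_zero_iff]
  simp [sub_eq_iff_eq_add', eq_comm]

lemma coe_add_int (a : ℝ) (k : ℤ) : ((a + k : ℝ) : S1) = a :=
  (coe_eq_coe_iff.2 ⟨k, rfl⟩).symm

lemma coe_sub_int (a : ℝ) (k : ℤ) : ((a - k : ℝ) : S1) = a := by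
  rw [← coe_add_int (a - k) k, sub_add_cancel]

lemma coe_ne_coe {a b : ℝ} (hab : a < b) (hba : b < a + 1) : (a : S1) ≠ b := fun h =>
  hab.ne <| (AddCircle.coe_eq_coe_iff_of_mem_Ico (a := a) ⟨le_rfl, by linarith⟩
    ⟨hab.le, hba⟩).1 h

lemma exists_coe_mem_Ioc {F : Set S1} (hF : F.Nonempty) (x : ℝ) :
    ∃ y : ℝ, (y : S1) ∈ F ∧ x - 1 < y ∧ y ≤ x := by
  obtain ⟨s, hs⟩ := hF
  obtain ⟨a, rfl⟩ := QuotientAddGroup.mk_surjective s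
  refine ⟨a - ⌈a - x⌉, by rwa [coe_sub_int], ?_, ?_⟩
  · linarith [Int.ceil_lt_add_one (a - x)]
  · linarith [Int.le_ceil (a - x)]

def repIco (a : ℝ) (s : S1) : ℝ := AddCircle.equivIco 1 a s

lemma repIco_mem (a : ℝ) (s : S1) : repIco a s ∈ Ico a (a + 1) := (AddCircle.equivIco 1 a s).2

@[simp]
lemma coe_repIco (a : ℝ) (s : S1) : (repIco a s : S1) = s := AddCircle.coe_equivIco

lemma repIco_eq {a b : ℝ} {s : S1} (hb : b ∈ Ico a (a + 1)) (hs : (b : S1) = s) :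
    repIco a s = b := by
  subst hs; exact AddCircle.equivIco_coe_of_mem hb

lemma csbtw_coe_iff {a : ℝ} {y z : S1} :
    CSBtw a y z ↔ a < repIco a y ∧ repIco a y < repIco a z := by
  constructor
  · rintro ⟨a', b, c, ha, rfl, rfl, hab, hbc, hca⟩
    obtain ⟨k, rfl⟩ := coe_eq_coe_iff.1 ha.symm
    rw [repIco_eq (b := b - k) ⟨by linarith, by linarith⟩ (by simp),
      repIco_eq (b := c - k) ⟨by linarith, by linarith⟩ (by simp)]
    constructor <;> linarith
  · rintro ⟨hy, hyz⟩
    exact ⟨a, _, _, rfl, coe_repIco a y, coe_repIco a z, hy, hyz, (repIco_mem a z).2⟩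

end S1

open S1

lemma CSBtw.not_swap {x y z : S1} (h : CSBtw x y z) : ¬ CSBtw x z y := by
  obtain ⟨a, rfl⟩ := QuotientAddGroup.mk_surjective x
  rw [csbtw_coe_iff] at h ⊢
  exact fun h' => h.2.not_gt h'.2

lemma CSBtw.pairwise_ne {x y z : S1} (h : CSBtw x y z) : x ≠ y ∧ y ≠ z ∧ x ≠ z := by
  obtain ⟨a, rfl⟩ := QuotientAddGroup.mk_surjective x
  have hrep : ∀ s : S1, s = (a : S1) → repIco a s = a := fun s hs =>
    repIco_eq ⟨le_rfl, by linarith⟩ hs.symm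
  rw [csbtw_coe_iff] at h
  refine ⟨fun e => ?_, fun e => ?_, fun e => ?_⟩
  · linarith [hrep y e.symm]
  · rw [e] at h; exact h.2.false
  · linarith [hrep z e.symm]

lemma csbtw_or_csbtw_swap {x y z : S1} (hxy : x ≠ y) (hyz : y ≠ z) (hxz : x ≠ z) :
    CSBtw x y z ∨ CSBtw x z y := by
  obtain ⟨a, rfl⟩ := QuotientAddGroup.mk_surjective x
  have hlt : ∀ s : S1, (a : S1) ≠ s → a < repIco a s := fun s hs =>
    (repIco_mem a s).1.lt_of_ne fun e => hs (by rw [← coe_repIco a s, ← e])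
  have hyz' : repIco a y ≠ repIco a z := fun e => hyz (by rw [← coe_repIco a y, e, coe_repIco])
  simp only [csbtw_coe_iff]
  rcases hyz'.lt_or_gt with h | h
  · exact Or.inl ⟨hlt y hxy, h⟩
  · exact Or.inr ⟨hlt z hxz, h⟩

lemma COPOn.of_invOn {ξ ξ' : S1 → S1} {F₁ F₂ : Set S1} (hcop : COPOn ξ F₁)
    (hinv : InvOn ξ' ξ F₁ F₂) (hmaps : MapsTo ξ' F₂ F₁) : COPOn ξ' F₂ := by
  intro u hu v hv w hw huvw
  obtain ⟨huv, hvw, huw⟩ := huvw.pairwise_ne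
  have hinj : InjOn ξ' F₂ := hinv.2.injOn
  refine (csbtw_or_csbtw_swap (hinj.ne hu hv huv) (hinj.ne hv hw hvw)
    (hinj.ne hu hw huw)).resolve_right fun h => huvw.not_swap ?_
  simpa only [hinv.2 hu, hinv.2 hv, hinv.2 hw] using hcop _ (hmaps hu) _ (hmaps hw) _ (hmaps hv) h

lemma map_add_int_of_map_add_one {f : ℝ → ℝ} (hf : ∀ x, f (x + 1) = f x + 1) (x : ℝ) (k : ℤ) :
    f (x + k) = f x + k := by
  have hper : Function.Periodic (fun x => f x - x) 1 := fun x => by simp only [hf]; ring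
  have h := hper.int_mul k x
  simp only [mul_one] at h
  linarith

namespace S1

structure IsMonotoneLiftOn (F : Set S1) (f : S1 → S1) (A : ℝ → ℝ) : Prop where
  monotoneOn : MonotoneOn A ((↑) ⁻¹' F)
  map_add_one : ∀ y, A (y + 1) = A y + 1
  coe_apply : ∀ y : ℝ, (y : S1) ∈ F → (A y : S1) = f y

namespace IsMonotoneLiftOn

variable {F F' : Set S1} {f f' k : S1 → S1} {A B X : ℝ → ℝ}

lemma mono (hA : IsMonotoneLiftOn F' f A) (hF : F ⊆ F') : IsMonotoneLiftOn F f A :=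
  ⟨hA.monotoneOn.mono fun _ hy => hF hy, hA.map_add_one, fun y hy => hA.coe_apply y (hF hy)⟩

lemma congr (hA : IsMonotoneLiftOn F f A) (h : EqOn f f' F) : IsMonotoneLiftOn F f' A :=
  ⟨hA.monotoneOn, hA.map_add_one, fun y hy => (hA.coe_apply y hy).trans (h hy)⟩

lemma comp (hX : IsMonotoneLiftOn F' k X) (hA : IsMonotoneLiftOn F f A) (hf : MapsTo f F F') :
    IsMonotoneLiftOn F (k ∘ f) (X ∘ A) where
  monotoneOn y hy y' hy' hle := by
    have hmem : ∀ z : ℝ, (z : S1) ∈ F → (A z : S1) ∈ F' := fun z hz => by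
      rw [hA.coe_apply z hz]; exact hf hz
    exact hX.monotoneOn (hmem y hy) (hmem y' hy') (hA.monotoneOn hy hy' hle)
  map_add_one y := by simp only [Function.comp_apply, hA.map_add_one, hX.map_add_one]
  coe_apply y hy := by
    simp only [Function.comp_apply, hX.coe_apply _ (by rw [hA.coe_apply y hy]; exact hf hy),
      hA.coe_apply y hy]

lemma exists_int_sub (hA : IsMonotoneLiftOn F f A) (hB : IsMonotoneLiftOn F f B) {y : ℝ}
    (hy : (y : S1) ∈ F) : ∃ n : ℤ, A y - B y = n := by
  obtain ⟨n, hn⟩ := coe_eq_coe_iff.1 ((hA.coe_apply y hy).trans (hB.coe_apply y hy).symm)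
  exact ⟨-n, by push_cast; linarith⟩

lemma lt_and_lt_add_one (hA : IsMonotoneLiftOn F f A) (hf : InjOn f F) {y z : ℝ}
    (hy : (y : S1) ∈ F) (hz : (z : S1) ∈ F) (hyz : y < z) (hzy : z < y + 1) :
    A y < A z ∧ A z < A y + 1 := by
  have hy1 : ((y + 1 : ℝ) : S1) ∈ F := by rwa [AddCircle.coe_add_period]
  have hne : f y ≠ f z := hf.ne hy hz (coe_ne_coe hyz hzy)
  refine ⟨(hA.monotoneOn hy hz hyz.le).lt_of_ne fun e => hne ?_,
    (hA.monotoneOn hz hy1 hzy.le).trans_eq (hA.map_add_one y) |>.lt_of_ne fun e => hne ?_⟩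
  · rw [← hA.coe_apply y hy, ← hA.coe_apply z hz, e]
  · rw [← hA.coe_apply y hy, ← hA.coe_apply z hz, e, AddCircle.coe_add_period]

lemma sub_eq_sub (hA : IsMonotoneLiftOn F f A) (hB : IsMonotoneLiftOn F f B) (hf : InjOn f F)
    {y z : ℝ} (hy : (y : S1) ∈ F) (hz : (z : S1) ∈ F) : A y - B y = A z - B z := by
  set n := ⌊z - y⌋
  have hz' : ((z - n : ℝ) : S1) ∈ F := by rwa [coe_sub_int]
  have hshift : A (z - n) - B (z - n) = A z - B z := by
    have hA' := map_add_int_of_map_add_one hA.map_add_one (z - n) n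
    have hB' := map_add_int_of_map_add_one hB.map_add_one (z - n) n
    rw [sub_add_cancel] at hA' hB'
    linarith
  rw [← hshift]
  rcases (Int.floor_le (z - y)).lt_or_eq with hlt | heq
  · have hzy : z - n < y + 1 := by linarith [Int.lt_floor_add_one (z - y)]
    obtain ⟨hA₁, hA₂⟩ := hA.lt_and_lt_add_one hf hy hz' (by linarith) hzy
    obtain ⟨hB₁, hB₂⟩ := hB.lt_and_lt_add_one hf hy hz' (by linarith) hzy
    obtain ⟨m, hm⟩ := hA.exists_int_sub hB hy
    obtain ⟨m', hm'⟩ := hA.exists_int_sub hB hz'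
    have h₁ : m' - m < 1 := by exact_mod_cast (by push_cast; linarith : ((m' - m : ℤ) : ℝ) < 1)
    have h₂ : -1 < m' - m := by
      exact_mod_cast (by push_cast; linarith : ((-1 : ℤ) : ℝ) < (m' - m : ℤ))
    have : m' = m := by omega
    rw [hm, hm', this]
  · rw [show z - n = y by linarith]

end IsMonotoneLiftOn

end S1

namespace RGp

variable {G : Type} [Group G] (φ : RGp G) (g : G)

lemma inv_apply_apply (s : S1) : φ.toFun g⁻¹ (φ.toFun g s) = s := by
  rw [map_inv]; exact (φ.toFun g).symm_apply_apply s

lemma apply_mem_iff {F : Set S1} (hF : ∀ g, ∀ x ∈ F, φ.toFun g x ∈ F) {s : S1} :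
    φ.toFun g s ∈ F ↔ s ∈ F :=
  ⟨fun h => φ.inv_apply_apply g s ▸ hF g⁻¹ _ h, hF g s⟩

def lift : ℝ → ℝ := (φ.op g).choose

lemma strictMono_lift : StrictMono (φ.lift g) := (φ.op g).choose_spec.1

lemma lift_add_one (x : ℝ) : φ.lift g (x + 1) = φ.lift g x + 1 := (φ.op g).choose_spec.2.1 x

lemma coe_lift (x : ℝ) : (φ.lift g x : S1) = φ.toFun g x := (φ.op g).choose_spec.2.2 x

lemma isMonotoneLiftOn_lift : S1.IsMonotoneLiftOn univ (φ.toFun g) (φ.lift g) :=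
  ⟨(φ.strictMono_lift g).monotone.monotoneOn _, φ.lift_add_one g, fun y _ => φ.coe_lift g y⟩

lemma surjective_lift : Function.Surjective (φ.lift g) := by
  intro w
  obtain ⟨y, hy⟩ := QuotientAddGroup.mk_surjective ((φ.toFun g).symm w)
  obtain ⟨k, hk⟩ := coe_eq_coe_iff.1
    (show (φ.lift g y : S1) = w by rw [φ.coe_lift, hy, Homeomorph.apply_symm_apply])
  exact ⟨y + k, by rw [map_add_int_of_map_add_one (φ.lift_add_one g), hk]⟩

lemma continuous_lift : Continuous (φ.lift g) :=
  (φ.strictMono_lift g).monotone.continuous_of_surjective (φ.surjective_lift g)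

end RGp

section LiftOfCOP

variable {F : Set S1} {ξ : S1 → S1}

lemma COPOn.repIco_le_repIco (hcop : COPOn ξ F) {x₀ b₀ : ℝ} (hx₀ : (x₀ : S1) ∈ F)
    (hb₀ : (b₀ : S1) = ξ x₀) {t t' : ℝ} (ht : (t : S1) ∈ F) (ht' : (t' : S1) ∈ F)
    (hx₀t : x₀ ≤ t) (htt' : t ≤ t') (ht'x₀ : t' < x₀ + 1) :
    repIco b₀ (ξ t) ≤ repIco b₀ (ξ t') := by
  rcases hx₀t.eq_or_lt with rfl | hx₀t
  · rw [repIco_eq ⟨le_rfl, by linarith⟩ hb₀]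
    exact (repIco_mem _ _).1
  rcases htt'.eq_or_lt with rfl | htt'
  · exact le_rfl
  have h := hcop _ hx₀ _ ht _ ht' ⟨x₀, t, t', rfl, rfl, rfl, hx₀t, htt', ht'x₀⟩
  rw [← hb₀, csbtw_coe_iff] at h
  exact h.2.le

/-- The lift reads `ξ` in the window `[b₀, b₀ + 1)` above a base point `x₀` of `F` and gains one
each time `y` crosses a translate of `x₀`; cyclic order preservation makes it monotone within a
window. -/
lemma COPOn.exists_isMonotoneLiftOn (hcop : COPOn ξ F) (hF : F.Nonempty) :
    ∃ X : ℝ → ℝ, IsMonotoneLiftOn F ξ X := by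
  obtain ⟨x₀, hx₀, -⟩ := exists_coe_mem_Ioc hF 0
  obtain ⟨b₀, hb₀⟩ := QuotientAddGroup.mk_surjective (ξ x₀)
  refine ⟨fun y => repIco b₀ (ξ y) + ⌊y - x₀⌋, fun y hy y' hy' hle => ?_, fun y => ?_,
    fun y _ => by rw [coe_add_int, coe_repIco]⟩
  · have hn : ⌊y - x₀⌋ ≤ ⌊y' - x₀⌋ := Int.floor_le_floor (by linarith)
    rcases hn.eq_or_lt with heq | hlt
    · have h := hcop.repIco_le_repIco hx₀ hb₀ (t := y - ⌊y - x₀⌋) (t' := y' - ⌊y' - x₀⌋)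
        (by rwa [coe_sub_int]) (by rwa [coe_sub_int]) (by linarith [Int.floor_le (y - x₀)])
        (by rw [← heq]; linarith) (by linarith [Int.lt_floor_add_one (y' - x₀)])
      rw [coe_sub_int, coe_sub_int] at h
      simp only [heq]
      linarith
    · have : (⌊y - x₀⌋ : ℝ) + 1 ≤ ⌊y' - x₀⌋ := by exact_mod_cast hlt
      linarith [(repIco_mem b₀ (ξ y)).2, (repIco_mem b₀ (ξ y')).1]
  · rw [AddCircle.coe_add_period, show y + 1 - x₀ = y - x₀ + 1 by ring, Int.floor_add_one]
    push_cast
    ring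

end LiftOfCOP

namespace S1

def supExtension (F : Set S1) (X : ℝ → ℝ) (x : ℝ) : ℝ := sSup (X '' ((↑) ⁻¹' F ∩ Iic x))

section SupExtension

variable {F : Set S1} {X : ℝ → ℝ}

lemma nonempty_image_Iic (hF : F.Nonempty) (x : ℝ) :
    (X '' ((↑) ⁻¹' F ∩ Iic x)).Nonempty := by
  obtain ⟨y, hy, -, hyx⟩ := exists_coe_mem_Ioc hF x
  exact ⟨X y, y, ⟨hy, hyx⟩, rfl⟩

lemma bddAbove_image_Iic (hF : F.Nonempty) (hX : MonotoneOn X ((↑) ⁻¹' F)) (x : ℝ) :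
    BddAbove (X '' ((↑) ⁻¹' F ∩ Iic x)) := by
  obtain ⟨y, hy, hxy, -⟩ := exists_coe_mem_Ioc hF (x + 1)
  refine ⟨X y, ?_⟩
  rintro _ ⟨z, ⟨hz, hzx⟩, rfl⟩
  exact hX hz hy (by linarith [mem_Iic.1 hzx])

lemma monotone_supExtension (hF : F.Nonempty) (hX : MonotoneOn X ((↑) ⁻¹' F)) :
    Monotone (supExtension F X) := fun x x' hxx' =>
  csSup_le_csSup (bddAbove_image_Iic hF hX x') (nonempty_image_Iic hF x)
    (image_mono (inter_subset_inter_right _ (Iic_subset_Iic.2 hxx')))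

lemma supExtension_comp (hF : F.Nonempty) (hX : MonotoneOn X ((↑) ⁻¹' F)) {A B : ℝ → ℝ}
    (hA : StrictMono A) (hAs : Function.Surjective A) (hAF : ∀ y : ℝ, (A y : S1) ∈ F ↔ (y : S1) ∈ F)
    (hB : Monotone B) (hBc : Continuous B) (hXAB : ∀ y : ℝ, (y : S1) ∈ F → X (A y) = B (X y))
    (x : ℝ) : supExtension F X (A x) = B (supExtension F X x) := by
  have himage : (↑) ⁻¹' F ∩ Iic (A x) = A '' ((↑) ⁻¹' F ∩ Iic x) := by
    ext z
    obtain ⟨y, rfl⟩ := hAs z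
    simp [hA.le_iff_le, hAF, hA.injective.eq_iff]
  calc supExtension F X (A x) = sSup (B '' (X '' ((↑) ⁻¹' F ∩ Iic x))) := by
        rw [supExtension, himage, image_image, image_image]
        exact congrArg sSup (image_congr fun y hy => hXAB y hy.1)
    _ = B (supExtension F X x) :=
        (hB.map_csSup_of_continuousAt hBc.continuousAt (nonempty_image_Iic hF x)
          (bddAbove_image_Iic hF hX x)).symm

lemma supExtension_add_one (hF : F.Nonempty) (hX : MonotoneOn X ((↑) ⁻¹' F))
    (hX1 : ∀ y, X (y + 1) = X y + 1) (x : ℝ) :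
    supExtension F X (x + 1) = supExtension F X x + 1 :=
  supExtension_comp hF hX (A := (· + 1)) (B := (· + 1)) (strictMono_id.add_const 1)
    (fun z => ⟨z - 1, sub_add_cancel z 1⟩) (fun y => by rw [AddCircle.coe_add_period])
    (monotone_id.add_const 1) (continuous_add_const 1) (fun y _ => hX1 y) x

end SupExtension

/-- Only meaningful when `H` commutes with `x ↦ x + 1`; otherwise it depends on the choice of
representatives in `[0, 1)`. -/
def descend (H : ℝ → ℝ) (s : S1) : S1 := H (repIco 0 s)

lemma descend_coe {H : ℝ → ℝ} (hH : ∀ x, H (x + 1) = H x + 1) (x : ℝ) :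
    descend H x = H x := by
  obtain ⟨k, hk⟩ := coe_eq_coe_iff.1 (coe_repIco 0 (x : S1)).symm
  rw [descend, hk, map_add_int_of_map_add_one hH, coe_add_int]

lemma degOneMonotone_descend {H : ℝ → ℝ} (hm : Monotone H) (hH : ∀ x, H (x + 1) = H x + 1) :
    DegOneMonotone (descend H) :=
  ⟨H, hm, hH, fun x => (descend_coe hH x).symm⟩

end S1

section Semiconjugacy

variable {G : Type} [Group G]

lemma HasGlobalFix.of_semiconj {φ₁ φ₂ : RGp G} (hfix : HasGlobalFix φ₁) {h : S1 → S1}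
    (hh : ∀ g x, φ₂.toFun g (h x) = h (φ₁.toFun g x)) : HasGlobalFix φ₂ := by
  obtain ⟨x, hx⟩ := hfix
  exact ⟨h x, fun g => by rw [hh, hx]⟩

lemma equivariant_of_invOn {φ₁ φ₂ : RGp G} {F₁ F₂ : Set S1} {ξ ξ' : S1 → S1}
    (hinv₁ : ∀ g, ∀ x ∈ F₁, φ₁.toFun g x ∈ F₁) (hξ' : InvOn ξ' ξ F₁ F₂) (hmaps : MapsTo ξ' F₂ F₁)
    (heqv : ∀ g, ∀ x ∈ F₁, ξ (φ₁.toFun g x) = φ₂.toFun g (ξ x)) :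
    ∀ g, ∀ x ∈ F₂, ξ' (φ₂.toFun g x) = φ₁.toFun g (ξ' x) := by
  intro g u hu
  calc ξ' (φ₂.toFun g u) = ξ' (φ₂.toFun g (ξ (ξ' u))) := by rw [hξ'.2 hu]
    _ = ξ' (ξ (φ₁.toFun g (ξ' u))) := by rw [heqv g _ (hmaps hu)]
    _ = φ₁.toFun g (ξ' u) := hξ'.1 (hinv₁ g _ (hmaps hu))

variable {φ₁ φ₂ : RGp G} {F : Set S1} {ξ : S1 → S1}

/-- Two monotone lifts of `ξ ∘ φ₁ g = φ₂ g ∘ ξ` differ by an integer, which can be absorbed into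
the lift of `φ₂ g`. -/
lemma exists_lift_intertwining {X : ℝ → ℝ} (hX : IsMonotoneLiftOn F ξ X) (hF : F.Nonempty)
    (hinv : ∀ g, ∀ x ∈ F, φ₁.toFun g x ∈ F) (hinj : InjOn ξ F)
    (heqv : ∀ g, ∀ x ∈ F, ξ (φ₁.toFun g x) = φ₂.toFun g (ξ x)) (g : G) :
    ∃ B : ℝ → ℝ, Monotone B ∧ Continuous B ∧ (∀ x : ℝ, (B x : S1) = φ₂.toFun g x) ∧
      ∀ y : ℝ, (y : S1) ∈ F → X (φ₁.lift g y) = B (X y) := by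
  obtain ⟨y₀, hy₀, -⟩ := exists_coe_mem_Ioc hF 0
  have hmaps : MapsTo (φ₁.toFun g) F F := hinv g
  have h₁ : IsMonotoneLiftOn F (ξ ∘ φ₁.toFun g) (X ∘ φ₁.lift g) :=
    hX.comp ((φ₁.isMonotoneLiftOn_lift g).mono (subset_univ F)) hmaps
  have h₂ : IsMonotoneLiftOn F (ξ ∘ φ₁.toFun g) (φ₂.lift g ∘ X) :=
    ((φ₂.isMonotoneLiftOn_lift g).comp hX (mapsTo_univ _ _)).congr fun x hx => (heqv g x hx).symm
  have hinj' : InjOn (ξ ∘ φ₁.toFun g) F := hinj.comp (φ₁.toFun g).injective.injOn hmaps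
  obtain ⟨k, hk⟩ := h₁.exists_int_sub h₂ hy₀
  refine ⟨fun x => φ₂.lift g x + k, (φ₂.strictMono_lift g).monotone.add_const _,
    (φ₂.continuous_lift g).add continuous_const, fun x => by rw [coe_add_int, φ₂.coe_lift],
    fun y hy => ?_⟩
  have hconst := h₁.sub_eq_sub h₂ hinj' hy hy₀
  simp only [Function.comp_apply] at hconst hk ⊢
  linarith

theorem exists_degOneMonotone_semiconj (hF : F.Nonempty) (hinv : ∀ g, ∀ x ∈ F, φ₁.toFun g x ∈ F)
    (hinj : InjOn ξ F) (hcop : COPOn ξ F)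
    (heqv : ∀ g, ∀ x ∈ F, ξ (φ₁.toFun g x) = φ₂.toFun g (ξ x)) :
    ∃ h : S1 → S1, DegOneMonotone h ∧ ∀ g x, φ₂.toFun g (h x) = h (φ₁.toFun g x) := by
  obtain ⟨X, hX⟩ := hcop.exists_isMonotoneLiftOn hF
  choose B hBm hBc hBφ hXB using exists_lift_intertwining hX hF hinv hinj heqv
  have hH1 := supExtension_add_one hF hX.monotoneOn hX.map_add_one
  refine ⟨descend (supExtension F X),
    degOneMonotone_descend (monotone_supExtension hF hX.monotoneOn) hH1, fun g x => ?_⟩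
  obtain ⟨t, rfl⟩ := QuotientAddGroup.mk_surjective x
  have hH : supExtension F X (φ₁.lift g t) = B g (supExtension F X t) :=
    supExtension_comp hF hX.monotoneOn (φ₁.strictMono_lift g) (φ₁.surjective_lift g)
      (fun y => by rw [φ₁.coe_lift]; exact φ₁.apply_mem_iff g hinv) (hBm g) (hBc g) (hXB g) t
  rw [descend_coe hH1, ← hBφ g, ← hH, ← descend_coe hH1, φ₁.coe_lift]

end Semiconjugacy

/-- A cyclic-order-preserving equivariant bijection between invariant
sets yields a semiconjugacy. -/
theorem semiconj_of_equivariant_bijection (G : Type) [Group G] (φ₁ φ₂ : RGp G)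
    (F₁ F₂ : Set S1) (hne : F₁.Nonempty)
    (hinv₁ : ∀ g, ∀ x ∈ F₁, φ₁.toFun g x ∈ F₁)
    (hinv₂ : ∀ g, ∀ x ∈ F₂, φ₂.toFun g x ∈ F₂)
    (ξ : S1 → S1) (hbij : Set.BijOn ξ F₁ F₂) (hcop : COPOn ξ F₁)
    (heqv : ∀ g, ∀ x ∈ F₁, ξ (φ₁.toFun g x) = φ₂.toFun g (ξ x)) :
    Semiconj φ₁ φ₂ := by
  have hξ' : InvOn (Function.invFunOn ξ F₁) ξ F₁ F₂ := hbij.invOn_invFunOn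
  have hbij' : BijOn (Function.invFunOn ξ F₁) F₂ F₁ := hbij.symm hξ'.symm
  obtain ⟨h, hh, hsemi⟩ := exists_degOneMonotone_semiconj hne hinv₁ hbij.injOn hcop heqv
  obtain ⟨h', -, hsemi'⟩ := exists_degOneMonotone_semiconj
    (hne.image ξ |>.mono hbij.mapsTo.image_subset) hinv₂ hbij'.injOn
    (hcop.of_invOn hξ' hbij'.mapsTo) (equivariant_of_invOn hinv₁ hξ' hbij'.mapsTo heqv)
  by_cases hfix : HasGlobalFix φ₁
  · exact Or.inl ⟨hfix, hfix.of_semiconj hsemi⟩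
  · exact Or.inr ⟨hfix, fun hfix₂ => hfix (hfix₂.of_semiconj hsemi'), h, hh, hsemi⟩
end
end

section
/- For any group G, the set R_G(0) of homomorphisms φ ∈ R_G admitting a φ(G)-invariant Borel probability measure on S¹ is a closed subset of R_G in the weak topology. -/
/-!
Invariant measures pass to limits. If `φ` lies in the closure of the type 0 homomorphisms, pick
an invariant probability measure `μ_ψ` for each type 0 `ψ` and, by compactness of the space of
probability measures on the circle (Prokhorov), a weak limit `μ` of `μ_ψ` along an ultrafilter
converging to `φ`. Convergence in `R_G` is uniform convergence of each `ψ(g)` to `φ(g)`, and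
push-forward of probability measures is jointly continuous for weak convergence of measures and
uniform convergence of continuous maps into a compact space. Hence `φ(g)_* μ` is the limit of
`ψ(g)_* μ_ψ = μ_ψ`, i.e. `φ(g)_* μ = μ`.
-/

noncomputable section

/-- The uniform distance between two homeomorphisms of the circle. -/
def circleDist (f h : S1 ≃ₜ S1) : ℝ := ⨆ x : S1, dist (f x) (h x)

/-- The weak topology on `R_G`, generated by the sets `U(φ; g, ε)`. -/
instance weakTopology (G : Type) [Group G] : TopologicalSpace (RGp G) :=
  .generateFrom {U | ∃ (ψ : RGp G) (g : G) (ε : ℝ), 0 < ε ∧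
    U = {χ : RGp G | circleDist (χ.toFun g) (ψ.toFun g) < ε}}

instance : Fact ((0:ℝ) < 1) := ⟨one_pos⟩

/-- Type 0: there is an invariant Borel probability measure on the circle. -/
def IsType0 {G : Type} [Group G] (φ : RGp G) : Prop :=
  ∃ μ : MeasureTheory.Measure S1, MeasureTheory.IsProbabilityMeasure μ ∧
    ∀ g, MeasureTheory.Measure.map (φ.toFun g) μ = μ


open MeasureTheory Filter Topology BoundedContinuousFunction

namespace MeasureTheory.ProbabilityMeasure

variable {ι X Y : Type*} {l : Filter ι}
  [TopologicalSpace X] [MeasurableSpace X] [OpensMeasurableSpace X]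
  {μs : ι → ProbabilityMeasure X} {μ : ProbabilityMeasure X}

lemma tendsto_integral_of_tendsto_of_tendsto (hμ : Tendsto μs l (𝓝 μ))
    {fs : ι → X →ᵇ ℝ} {f : X →ᵇ ℝ} (hf : Tendsto fs l (𝓝 f)) :
    Tendsto (fun i ↦ ∫ x, fs i x ∂(μs i : Measure X)) l (𝓝 (∫ x, f x ∂(μ : Measure X))) := by
  have hdiff : Tendsto (fun i ↦ ∫ x, (fs i - f) x ∂(μs i : Measure X)) l (𝓝 0) :=
    squeeze_zero_norm (fun i ↦ (fs i - f).norm_integral_le_norm _)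
      (tendsto_iff_norm_sub_tendsto_zero.mp hf)
  have hfix := tendsto_iff_forall_integral_tendsto.mp hμ f
  simpa [integral_sub ((fs _).integrable _) (f.integrable _)] using hdiff.add hfix

lemma tendsto_map_of_tendstoUniformly [UniformSpace Y] [CompactSpace Y] [MeasurableSpace Y]
    [BorelSpace Y] (hμ : Tendsto μs l (𝓝 μ)) {fs : ι → X → Y} {f : X → Y}
    (hfs : ∀ i, Continuous (fs i)) (hf : Continuous f) (hunif : TendstoUniformly fs f l) :
    Tendsto (fun i ↦ (μs i).map (hfs i).measurable.aemeasurable) l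
      (𝓝 (μ.map hf.measurable.aemeasurable)) := by
  refine tendsto_iff_forall_integral_tendsto.mpr fun h ↦ ?_
  have hcomp : Tendsto (fun i ↦ h.compContinuous ⟨fs i, hfs i⟩) l
      (𝓝 (h.compContinuous ⟨f, hf⟩)) :=
    tendsto_iff_tendstoUniformly.mpr
      ((CompactSpace.uniformContinuous_of_continuous h.continuous).comp_tendstoUniformly hunif)
  simpa [integral_map (hfs _).measurable.aemeasurable h.continuous.aestronglyMeasurable,
    integral_map hf.measurable.aemeasurable h.continuous.aestronglyMeasurable]
    using tendsto_integral_of_tendsto_of_tendsto hμ hcomp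

lemma map_eq_self_of_tendstoUniformly [UniformSpace Y] [CompactSpace Y] [MeasurableSpace Y]
    [BorelSpace Y] [HasOuterApproxClosed Y] [l.NeBot] {νs : ι → ProbabilityMeasure Y}
    {ν : ProbabilityMeasure Y} (hν : Tendsto νs l (𝓝 ν)) {fs : ι → Y → Y} {f : Y → Y}
    (hfs : ∀ i, Continuous (fs i)) (hf : Continuous f) (hunif : TendstoUniformly fs f l)
    (hinv : ∀ᶠ i in l, (νs i : Measure Y).map (fs i) = νs i) :
    (ν : Measure Y).map f = ν := by
  have hmap := tendsto_map_of_tendstoUniformly hν hfs hf hunif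
  have hself : Tendsto (fun i ↦ (νs i).map (hfs i).measurable.aemeasurable) l (𝓝 ν) :=
    hν.congr' (hinv.mono fun i hi ↦ toMeasure_injective hi.symm)
  exact congrArg ((↑) : ProbabilityMeasure Y → Measure Y) (tendsto_nhds_unique hmap hself)

end MeasureTheory.ProbabilityMeasure

lemma dist_le_circleDist (f h : S1 ≃ₜ S1) (x : S1) : dist (f x) (h x) ≤ circleDist f h :=
  le_ciSup (isCompact_range (f.continuous.dist h.continuous)).bddAbove x

lemma circleDist_self (f : S1 ≃ₜ S1) : circleDist f f = 0 := by
  simp [circleDist]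

lemma RGp.tendstoUniformly_toFun_apply {G : Type} [Group G] (φ : RGp G) (g : G) :
    TendstoUniformly (fun ψ : RGp G ↦ ⇑(ψ.toFun g)) (φ.toFun g) (𝓝 φ) := by
  refine Metric.tendstoUniformly_iff.mpr fun ε hε ↦ ?_
  have hball : IsOpen {χ : RGp G | circleDist (χ.toFun g) (φ.toFun g) < ε} :=
    TopologicalSpace.GenerateOpen.basic _ ⟨φ, g, ε, hε, rfl⟩
  filter_upwards [hball.mem_nhds (by simpa [circleDist_self] using hε)] with ψ hψ x
  rw [dist_comm]
  exact (dist_le_circleDist _ _ x).trans_lt hψ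

/-- The set of type 0 homomorphisms is closed in the weak topology. -/
theorem type0_isClosed (G : Type) [Group G] :
    IsClosed {φ : RGp G | IsType0 φ} := by
  refine isClosed_iff_clusterPt.mpr fun φ hφ ↦ ?_
  have hchoice : ∀ ψ : RGp G, ∃ μ : ProbabilityMeasure S1,
      IsType0 ψ → ∀ g, (μ : Measure S1).map (ψ.toFun g) = μ := by
    intro ψ
    by_cases hψ : IsType0 ψ
    · obtain ⟨μ, hμ, hinv⟩ := hψ
      exact ⟨⟨μ, hμ⟩, fun _ ↦ hinv⟩
    · exact ⟨⟨Measure.dirac 0, inferInstance⟩, fun h ↦ absurd h hψ⟩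
  choose μs hμs using hchoice
  have : (𝓝 φ ⊓ 𝓟 {ψ : RGp G | IsType0 ψ}).NeBot := hφ
  let U := Ultrafilter.of (𝓝 φ ⊓ 𝓟 {ψ : RGp G | IsType0 ψ})
  have hU : ↑U ≤ 𝓝 φ ⊓ 𝓟 {ψ : RGp G | IsType0 ψ} := Ultrafilter.of_le _
  obtain ⟨μ, -, hμ⟩ := isCompact_univ.ultrafilter_le_nhds (U.map μs) (by simp)
  refine ⟨μ, inferInstance, fun g ↦ ?_⟩
  have hconv : TendstoUniformly (fun ψ : RGp G ↦ ⇑(ψ.toFun g)) (φ.toFun g) U :=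
    fun u hu ↦ hU.trans inf_le_left (φ.tendstoUniformly_toFun_apply g u hu)
  have hinv : ∀ᶠ ψ in U, (μs ψ : Measure S1).map (ψ.toFun g) = μs ψ :=
    mem_of_superset (hU.trans inf_le_right (mem_principal_self _)) fun ψ hψ ↦ hμs ψ hψ g
  exact ProbabilityMeasure.map_eq_self_of_tendstoUniformly hμ (fun ψ ↦ (ψ.toFun g).continuous)
    (φ.toFun g).continuous hconv hinv
end
end

section
/- Let g ≥ 2 and suppose 2g−2 = kl with k, l positive integers. Let φ ∈ R_{Π_g} with eu(φ) = 2g−2. If for each j = 1,…,g one chooses arbitrary k-fold lifts of the homeomorphisms φ(A_j) and φ(B_j) (i.e. homeomorphisms whose π_k-projection is φ(A_j), resp. φ(B_j)), then the product of commutators of these lifts, taken in the order of the surface group relator, equals the identity; hence these choices define a k-fold lift ψ ∈ R_{Π_g} of φ, and every such lift satisfies eu(ψ) = l. -/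
noncomputable section

/-- The `k`-fold self covering map `π_k` of the circle. -/
def expk (k : ℕ) : S1 → S1 := fun x => k • x

/-- `ψ` is a `k`-fold lift of `φ`: `φ(g) ∘ π_k = π_k ∘ ψ(g)`. -/
def IsKFoldLift {G : Type} [Group G] (k : ℕ) (ψ φ : RGp G) : Prop :=
  ∀ g x, φ.toFun g (expk k x) = expk k (ψ.toFun g x)

/-- Minimal action: every orbit is dense. -/
def MinimalAct {G : Type} [Group G] (φ : RGp G) : Prop :=
  ∀ x : S1, Dense (Set.range fun g => φ.toFun g x)

/-- `ψ` is a minimal model of `φ`: a minimal action semiconjugate to `φ`. -/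
def IsMinimalModel {G : Type} [Group G] (φ ψ : RGp G) : Prop :=
  MinimalAct ψ ∧ Semiconj φ ψ

/-- Type `k` (`k ≥ 1`): not type 0, a minimal model is a `k`-fold lift of some
homomorphism, and `k` is maximal with this property. -/
def IsTypeK {G : Type} [Group G] (k : ℕ) (φ : RGp G) : Prop :=
  ¬ IsType0 φ ∧ ∃ ψ : RGp G, IsMinimalModel φ ψ ∧
    (∃ χ : RGp G, IsKFoldLift k ψ χ) ∧
    ∀ m : ℕ, (∃ χ : RGp G, IsKFoldLift m ψ χ) → m ≤ k

/-- The surface group relator `[A₁,B₁]⋯[A_g,B_g]`. -/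
def surfaceRelator (g : ℕ) : FreeGroup (Fin g × Bool) :=
  (List.ofFn fun i : Fin g =>
    FreeGroup.of (i, true) * FreeGroup.of (i, false) *
      (FreeGroup.of (i, true))⁻¹ * (FreeGroup.of (i, false))⁻¹).prod

/-- The surface group `Π_g` of genus `g`. -/
abbrev SurfaceGroup (g : ℕ) :=
  PresentedGroup ({surfaceRelator g} : Set (FreeGroup (Fin g × Bool)))

/-- The generator `A_i` of `Π_g`. -/
def Agen (g : ℕ) (i : Fin g) : SurfaceGroup g :=
  PresentedGroup.of (rels := ({surfaceRelator g} : Set (FreeGroup (Fin g × Bool)))) (i, true)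

/-- The generator `B_i` of `Π_g`. -/
def Bgen (g : ℕ) (i : Fin g) : SurfaceGroup g :=
  PresentedGroup.of (rels := ({surfaceRelator g} : Set (FreeGroup (Fin g × Bool)))) (i, false)

/-- The translation `x ↦ x + n` of the real line. -/
def translationE (n : ℤ) : ℝ ≃ ℝ := Equiv.addRight (n : ℝ)

/-- `F` is a lift of `f` to `ℝ`, as a bijection of the real line. -/
def IsEquivLift (F : ℝ ≃ ℝ) (f : S1 ≃ₜ S1) : Prop :=
  StrictMono F ∧ (∀ x, F (x + 1) = F x + 1) ∧ ∀ x : ℝ, ((F x : S1)) = f (x : S1)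

/-- `φ ∈ R_{Π_g}` has Euler number `n`:
`[φ̃(A₁),φ̃(B₁)]⋯[φ̃(A_g),φ̃(B_g)] = Tⁿ` for (arbitrary) lifts of the generators. -/
def HasEuler {g : ℕ} (φ : RGp (SurfaceGroup g)) (n : ℤ) : Prop :=
  ∃ FA FB : Fin g → ℝ ≃ ℝ,
    (∀ i, IsEquivLift (FA i) (φ.toFun (Agen g i))) ∧
    (∀ i, IsEquivLift (FB i) (φ.toFun (Bgen g i))) ∧
    (List.ofFn fun i => FA i * FB i * (FA i)⁻¹ * (FB i)⁻¹).prod = translationE n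

/-!
If `F` lifts `f = φ(A_i)` to `ℝ` and `a` is a `k`-fold lift of `f`, then `x ↦ F (k x) / k` lifts
`a` up to a continuous error with values in the finite `k`-torsion of the circle; this error is
constant, so `x ↦ (F (k x) + m) / k` lifts `a` for some integer `m`. Conjugating by `x ↦ k x`
turns these rescaled lifts into integer translates of the lifts of `φ(A_i), φ(B_i)`. Integer
translations commute with all lifts, so they do not change the commutators, and the relator on the
rescaled lifts is the conjugate of `T^(2g-2) = T^(kl)`, namely `T^l`. Projected to the circle this
is the surface relation for the `k`-fold lifts, and the rescaled lifts witness `eu(ψ) = l`.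
-/

open scoped commutatorElement

lemma map_add_int_of_map_add_one_s7 {F : ℝ → ℝ} (hF : ∀ x, F (x + 1) = F x + 1) (x : ℝ) (n : ℤ) :
    F (x + n) = F x + n :=
  AddConstMapClass.map_add_int (⟨F, hF⟩ : AddConstMap ℝ ℝ 1 1) x n

lemma commute_translationE {F : ℝ ≃ ℝ} (hF : ∀ x, F (x + 1) = F x + 1) (n : ℤ) :
    Commute (translationE n) F :=
  Equiv.ext fun x => (map_add_int_of_map_add_one_s7 hF x n).symm

lemma conj_mulLeft₀_eq_of_forall_mul {c : ℝ} (hc : c ≠ 0) {G H : ℝ ≃ ℝ}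
    (h : ∀ x, c * G x = H (c * x)) : MulAut.conj (Equiv.mulLeft₀ c hc) G = H := by
  ext x
  simpa [MulAut.conj_apply, mul_inv_cancel_left₀ hc] using h (c⁻¹ * x)

lemma eq_of_continuous_of_nsmul_eq_zero {k : ℕ} (hk : 0 < k) {d : ℝ → S1} (hd : Continuous d)
    (htor : ∀ x, k • d x = 0) (x y : ℝ) : d x = d y :=
  isPreconnected_univ.constant_of_mapsTo (AddCircle.finite_torsion 1 hk).isDiscrete
    hd.continuousOn (fun x _ => htor x) trivial trivial

lemma exists_int_div_eq_of_nsmul_eq_zero {k : ℕ} (hk : 0 < k) {y : S1} (hy : k • y = 0) :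
    ∃ m : ℤ, ((m / k : ℝ) : S1) = y := by
  obtain ⟨c, rfl⟩ := QuotientAddGroup.mk_surjective y
  rw [← AddCircle.coe_nsmul, AddCircle.coe_eq_zero_iff] at hy
  obtain ⟨m, hm⟩ := hy
  refine ⟨m, congrArg _ ?_⟩
  rw [zsmul_one, nsmul_eq_mul] at hm
  field_simp
  linarith

lemma IsEquivLift.continuous {F : ℝ ≃ ℝ} {f : S1 ≃ₜ S1} (hF : IsEquivLift F f) : Continuous F :=
  hF.1.monotone.continuous_of_surjective F.surjective

lemma exists_isEquivLift_of_kfold {k : ℕ} (hk : 0 < k) {f a : S1 ≃ₜ S1} {F : ℝ ≃ ℝ}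
    (hF : IsEquivLift F f) (ha : ∀ x, f (expk k x) = expk k (a x)) :
    ∃ (G : ℝ ≃ ℝ) (m : ℤ), IsEquivLift G a ∧ ∀ x, k * G x = (translationE m * F) (k * x) := by
  have hk' : (k : ℝ) ≠ 0 := by positivity
  let d (x : ℝ) : S1 := ((F (k * x) / k : ℝ) : S1) - a x
  have htor (x : ℝ) : k • d x = 0 := by
    rw [smul_sub, ← AddCircle.coe_nsmul, nsmul_eq_mul, mul_div_cancel₀ _ hk', hF.2.2,
      ← nsmul_eq_mul, AddCircle.coe_nsmul, sub_eq_zero]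
    exact ha x
  have hd : Continuous d :=
    ((AddCircle.continuous_mk' 1).comp
      ((hF.continuous.comp (continuous_const_mul _)).div_const _)).sub
      (a.continuous.comp (AddCircle.continuous_mk' 1))
  obtain ⟨m, hm⟩ := exists_int_div_eq_of_nsmul_eq_zero hk (y := -d 0)
    (by rw [smul_neg, htor, neg_zero])
  let s := Equiv.mulLeft₀ (k : ℝ) hk'
  have hG (x : ℝ) : (s⁻¹ * (translationE m * F) * s) x = (F (k * x) + m) / k := by
    simp [s, translationE, Equiv.mulLeft₀_symm_apply, inv_mul_eq_div]
  refine ⟨s⁻¹ * (translationE m * F) * s, m, ⟨fun x y hxy => ?_, fun x => ?_, fun x => ?_⟩,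
    fun x => ?_⟩
  · rw [hG, hG]
    gcongr
    exact hF.1 (by gcongr)
  · rw [hG, hG, mul_add, mul_one, ← Int.cast_natCast, map_add_int_of_map_add_one_s7 hF.2.1]
    field_simp
    ring
  · rw [hG, add_div, AddCircle.coe_add, hm, ← eq_of_continuous_of_nsmul_eq_zero hk hd htor x 0]
    simp [d]
  · rw [hG, mul_div_cancel₀ _ hk']
    simp [translationE]

lemma IsOP.exists_isEquivLift {f : S1 ≃ₜ S1} (hf : IsOP f) : ∃ F : ℝ ≃ ℝ, IsEquivLift F f := by
  obtain ⟨F, hmono, hF1, hlift⟩ := hf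
  have hsurj : Function.Surjective F := fun y => by
    obtain ⟨x, hx⟩ := QuotientAddGroup.mk_surjective (f.symm y)
    obtain ⟨n, hn⟩ : ∃ n : ℤ, n • (1 : ℝ) = y - F x := by
      rw [← AddCircle.coe_eq_zero_iff, AddCircle.coe_sub, hlift, hx, f.apply_symm_apply, sub_self]
    rw [zsmul_one] at hn
    exact ⟨x + n, by rw [map_add_int_of_map_add_one_s7 hF1, hn, add_sub_cancel]⟩
  exact ⟨Equiv.ofBijective F ⟨hmono.injective, hsurj⟩, hmono, hF1, hlift⟩

lemma IsOP.of_kfold {k : ℕ} (hk : 0 < k) {f a : S1 ≃ₜ S1} (hf : IsOP f)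
    (ha : ∀ x, f (expk k x) = expk k (a x)) : IsOP a := by
  obtain ⟨F, hF⟩ := hf.exists_isEquivLift
  obtain ⟨G, -, hG, -⟩ := exists_isEquivLift_of_kfold hk hF ha
  exact ⟨G, hG⟩

def liftGraph : Subgroup (Equiv.Perm ℝ × (S1 ≃ₜ S1)) where
  carrier := {p | ∀ x : ℝ, ((p.1 x : ℝ) : S1) = p.2 x}
  mul_mem' {p q} hp hq x := (hp (q.1 x)).trans (congrArg p.2 (hq x))
  one_mem' _ := rfl
  inv_mem' {p} hp x := p.2.injective <| by
    rw [← hp]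
    simp

def kfoldGraph (k : ℕ) : Subgroup ((S1 ≃ₜ S1) × (S1 ≃ₜ S1)) where
  carrier := {p | ∀ x, p.2 (expk k x) = expk k (p.1 x)}
  mul_mem' {p q} hp hq x := (congrArg p.2 (hq x)).trans (hp (q.1 x))
  one_mem' _ := rfl
  inv_mem' {p} hp x := p.2.injective <| by
    rw [hp]
    simp

lemma mem_kfoldGraph {k : ℕ} {p : (S1 ≃ₜ S1) × (S1 ≃ₜ S1)} :
    p ∈ kfoldGraph k ↔ ∀ x, p.2 (expk k x) = expk k (p.1 x) :=
  Iff.rfl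

lemma eq_one_of_mem_liftGraph {n : ℤ} {f : S1 ≃ₜ S1} (h : (translationE n, f) ∈ liftGraph) :
    f = 1 :=
  Homeomorph.ext fun y => by
    obtain ⟨x, rfl⟩ := QuotientAddGroup.mk_surjective y
    rw [← h x]
    simp [translationE]

section CommProd

variable {G H : Type*} [Group G] [Group H] {n : ℕ}

def commProd (a b : Fin n → G) : G :=
  (List.ofFn fun i => ⁅a i, b i⁆).prod

lemma map_commProd {F : Type*} [FunLike F G H] [MonoidHomClass F G H] (f : F)
    (a b : Fin n → G) : f (commProd a b) = commProd (fun i => f (a i)) (fun i => f (b i)) := by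
  simp [commProd, map_list_prod, List.map_ofFn, Function.comp_def, map_commutatorElement]

lemma commProd_mem {S : Subgroup G} {a b : Fin n → G} (ha : ∀ i, a i ∈ S) (hb : ∀ i, b i ∈ S) :
    commProd a b ∈ S :=
  S.list_prod_mem fun x hx => by
    obtain ⟨i, rfl⟩ := List.mem_ofFn.1 hx
    exact S.mul_mem (S.mul_mem (S.mul_mem (ha i) (hb i)) (S.inv_mem (ha i))) (S.inv_mem (hb i))

lemma mk_commProd_mem {S : Subgroup (G × H)} {a b : Fin n → G} {a' b' : Fin n → H}
    (ha : ∀ i, (a i, a' i) ∈ S) (hb : ∀ i, (b i, b' i) ∈ S) :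
    (commProd a b, commProd a' b') ∈ S := by
  convert commProd_mem ha hb using 1
  have h₁ := map_commProd (MonoidHom.fst G H) (fun i => (a i, a' i)) (fun i => (b i, b' i))
  have h₂ := map_commProd (MonoidHom.snd G H) (fun i => (a i, a' i)) (fun i => (b i, b' i))
  simp only [MonoidHom.coe_fst, MonoidHom.coe_snd] at h₁ h₂
  exact Prod.ext h₁.symm h₂.symm

lemma commutatorElement_mul_mul_of_commute {t u a b : G} (hta : Commute t a) (htb : Commute t b)
    (hua : Commute u a) (hub : Commute u b) (htu : Commute t u) : ⁅t * a, u * b⁆ = ⁅a, b⁆ := by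
  have hconj {s : G} (hsa : Commute s a) (hsb : Commute s b) : s * ⁅a, b⁆ * s⁻¹ = ⁅a, b⁆ := by
    rw [commutatorElement_def,
      (((hsa.mul_right hsb).mul_right hsa.inv_right).mul_right hsb.inv_right).eq,
      mul_inv_cancel_right]
  rw [commutatorElement_mul_left_eq_conj_mul, commutatorElement_mul_right_eq_mul_conj,
    commutatorElement_eq_one_iff_commute.2 hua.symm,
    commutatorElement_eq_one_iff_commute.2 (htu.mul_right htb), one_mul, mul_one, hconj hua hub,
    hconj hta htb]

end CommProd

lemma commProd_translationE_mul {n : ℕ} {F F' : Fin n → ℝ ≃ ℝ}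
    (hF : ∀ i x, F i (x + 1) = F i x + 1) (hF' : ∀ i x, F' i (x + 1) = F' i x + 1)
    (m m' : Fin n → ℤ) :
    commProd (fun i => translationE (m i) * F i) (fun i => translationE (m' i) * F' i) =
      commProd F F' := by
  have htrans (k : ℤ) (x : ℝ) : translationE k (x + 1) = translationE k x + 1 :=
    add_right_comm ..
  refine congrArg List.prod (congrArg List.ofFn (funext fun i => ?_))
  exact commutatorElement_mul_mul_of_commute
    (commute_translationE (hF i) _) (commute_translationE (hF' i) _)
    (commute_translationE (hF i) _) (commute_translationE (hF' i) _)
    (commute_translationE (htrans _) _)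

lemma surfaceRelator_eq_commProd (g : ℕ) :
    surfaceRelator g =
      commProd (fun i => FreeGroup.of (i, true)) (fun i => FreeGroup.of (i, false)) :=
  rfl

namespace SurfaceGroup

variable {g : ℕ} {G : Type*} [Group G]

def lift (a b : Fin g → G) (h : commProd a b = 1) : SurfaceGroup g →* G :=
  PresentedGroup.toGroup (f := fun p => if p.2 then a p.1 else b p.1) <| by
    rintro r rfl
    simpa [surfaceRelator_eq_commProd, map_commProd] using h

lemma lift_Agen (a b : Fin g → G) (h : commProd a b = 1) (i : Fin g) :
    lift a b h (Agen g i) = a i :=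
  PresentedGroup.toGroup.of _

lemma lift_Bgen (a b : Fin g → G) (h : commProd a b = 1) (i : Fin g) :
    lift a b h (Bgen g i) = b i :=
  PresentedGroup.toGroup.of _

lemma mem_of_generators {S : Subgroup (SurfaceGroup g)} (hA : ∀ i, Agen g i ∈ S)
    (hB : ∀ i, Bgen g i ∈ S) (γ : SurfaceGroup g) : γ ∈ S :=
  PresentedGroup.generated_by _ S (fun | (i, true) => hA i | (i, false) => hB i) γ

end SurfaceGroup

theorem lifts_give_kfold_lift_general (g k l : ℕ) (hk : 0 < k)
    (hkl : 2 * (g : ℤ) - 2 = (k : ℤ) * l)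
    (φ : RGp (SurfaceGroup g)) (heu : HasEuler φ (2 * (g : ℤ) - 2))
    (α β : Fin g → S1 ≃ₜ S1)
    (hα : ∀ i x, φ.toFun (Agen g i) (expk k x) = expk k (α i x))
    (hβ : ∀ i x, φ.toFun (Bgen g i) (expk k x) = expk k (β i x)) :
    (List.ofFn fun i => α i * β i * (α i)⁻¹ * (β i)⁻¹).prod = 1 ∧
    ∃ ψ : RGp (SurfaceGroup g),
      (∀ i, ψ.toFun (Agen g i) = α i ∧ ψ.toFun (Bgen g i) = β i) ∧
      IsKFoldLift k ψ φ ∧ HasEuler ψ (l : ℤ) := by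
  obtain ⟨FA, FB, hFA, hFB, hEu : commProd FA FB = _⟩ := heu
  choose GA mA hGA hGA_FA using fun i => exists_isEquivLift_of_kfold hk (hFA i) (hα i)
  choose GB mB hGB hGB_FB using fun i => exists_isEquivLift_of_kfold hk (hFB i) (hβ i)
  have hk' : (k : ℝ) ≠ 0 := by positivity
  have hEuG : commProd GA GB = translationE l := by
    apply (MulAut.conj (Equiv.mulLeft₀ (k : ℝ) hk')).injective
    rw [map_commProd, funext fun i => conj_mulLeft₀_eq_of_forall_mul hk' (hGA_FA i),
      funext fun i => conj_mulLeft₀_eq_of_forall_mul hk' (hGB_FB i),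
      commProd_translationE_mul (fun i => (hFA i).2.1) (fun i => (hFB i).2.1), hEu, hkl,
      conj_mulLeft₀_eq_of_forall_mul hk' fun x => ?_]
    simp [translationE, mul_add]
  have hrel : commProd α β = 1 := eq_one_of_mem_liftGraph <| hEuG ▸
    mk_commProd_mem (S := liftGraph) (fun i => (hGA i).2.2) (fun i => (hGB i).2.2)
  let ψ := SurfaceGroup.lift α β hrel
  have hψ (γ : SurfaceGroup g) : (ψ γ, φ.toFun γ) ∈ kfoldGraph k :=
    SurfaceGroup.mem_of_generators (S := (kfoldGraph k).comap (ψ.prod φ.toFun))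
      (fun i => by simpa [ψ, mem_kfoldGraph, SurfaceGroup.lift_Agen] using hα i)
      (fun i => by simpa [ψ, mem_kfoldGraph, SurfaceGroup.lift_Bgen] using hβ i) γ
  refine ⟨hrel, ⟨ψ, fun γ => (φ.op γ).of_kfold hk (hψ γ)⟩,
    fun i => ⟨SurfaceGroup.lift_Agen α β hrel i, SurfaceGroup.lift_Bgen α β hrel i⟩, hψ,
    GA, GB, fun i => ?_, fun i => ?_, hEuG⟩
  · simpa [ψ, SurfaceGroup.lift_Agen] using hGA i
  · simpa [ψ, SurfaceGroup.lift_Bgen] using hGB i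

/-- For `eu(φ) = 2g-2 = kl`, arbitrary `k`-fold lifts of the images
of the generators satisfy the surface group relation, hence define a `k`-fold lift
`ψ` of `φ`, and every such lift has Euler number `l`. -/
theorem lifts_give_kfold_lift (g k l : ℕ) (hg : 2 ≤ g) (hk : 0 < k) (hl : 0 < l)
    (hkl : 2 * (g : ℤ) - 2 = (k : ℤ) * l)
    (φ : RGp (SurfaceGroup g)) (heu : HasEuler φ (2 * (g : ℤ) - 2))
    (α β : Fin g → S1 ≃ₜ S1)
    (hα : ∀ i x, φ.toFun (Agen g i) (expk k x) = expk k (α i x))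
    (hβ : ∀ i x, φ.toFun (Bgen g i) (expk k x) = expk k (β i x)) :
    (List.ofFn fun i => α i * β i * (α i)⁻¹ * (β i)⁻¹).prod = 1 ∧
    ∃ ψ : RGp (SurfaceGroup g),
      (∀ i, ψ.toFun (Agen g i) = α i ∧ ψ.toFun (Bgen g i) = β i) ∧
      IsKFoldLift k ψ φ ∧ HasEuler ψ (l : ℤ) :=
  lifts_give_kfold_lift_general g k l hk hkl φ heu α β hα hβ
end
end

section
/- Let P be a basic partition for φ ∈ R_Γ. If J is a connected component of P^∞_♯ with lev(J) = l for some l ≥ 2, then there is a unique element s ∈ S such that lev(φ(s)J) = l−1, and for every other s ∈ S one has lev(φ(s)J) = l+1. -/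
noncomputable section

/-- A (proper) closed interval of the circle. -/
def IsClosedArc (I : Set S1) : Prop :=
  ∃ a b : ℝ, a ≤ b ∧ b < a + 1 ∧ I = (fun x : ℝ => (x : S1)) '' Set.Icc a b

/-- Proximality: every closed interval can be contracted to arbitrarily small
diameter by elements of the action. -/
def ProximalAct {G : Type} [Group G] (φ : RGp G) : Prop :=
  ∀ I : Set S1, IsClosedArc I → (⨅ g : G, Metric.diam (φ.toFun g '' I)) = 0

/-- The connected components of `X ⊆ S¹`. -/
def compsOf (X : Set S1) : Set (Set S1) := {C | ∃ x ∈ X, C = connectedComponentIn X x}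

/-- The components of `X_♯`: closures of the connected components of the complement. -/
def compsSharp (X : Set S1) : Set (Set S1) := {J | ∃ C ∈ compsOf Xᶜ, J = closure C}

/-- `X_♯`: the union of the closures of the connected components of `S¹ ∖ X`. -/
def sharpSet (X : Set S1) : Set S1 := ⋃₀ compsSharp X

/-- `X_* = X ∩ X_♯`. -/
def starSet (X : Set S1) : Set S1 := X ∩ sharpSet X

/-- `P` is a finite disjoint union of closed intervals. -/
def FinDisjClosedArcs (P : Set S1) : Prop :=
  ∃ 𝒞 : Finset (Set S1), (∀ I ∈ 𝒞, IsClosedArc I) ∧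
    (𝒞 : Set (Set S1)).Pairwise Disjoint ∧ P = ⋃₀ (𝒞 : Set (Set S1))

/-- Condition (2) of basic partitions: `φ(s)` maps `I` onto the union of `l ≥ 2`
distinct components of `P` and `l-1` distinct components of `P_♯`. -/
def ExpandsAt {Γ : Type} [Group Γ] (φ : RGp Γ) (P I : Set S1) (s : Γ) : Prop :=
  ∃ l : ℕ, 2 ≤ l ∧ ∃ Is : Fin l → Set S1, ∃ Js : Fin (l - 1) → Set S1,
    Function.Injective Is ∧ Function.Injective Js ∧
    (∀ i, Is i ∈ compsOf P) ∧ (∀ j, Js j ∈ compsSharp P) ∧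
    φ.toFun s '' I = (⋃ i, Is i) ∪ ⋃ j, Js j

/-- `P` is a basic partition for `φ` (with respect to the generating set `S`). -/
def IsBP {Γ : Type} [Group Γ] (φ : RGp Γ) (S : Set Γ) (P : Set S1) : Prop :=
  FinDisjClosedArcs P ∧
  (∀ I ∈ compsOf P, ∃! s, s ∈ S ∧ ExpandsAt φ P I s) ∧
  (∀ I ∈ compsOf P, ∀ s ∈ S, ¬ ExpandsAt φ P I s →
    ∃ I' ∈ compsOf P, φ.toFun s '' I ⊂ I') ∧
  (∀ J ∈ compsSharp P, ∀ s ∈ S,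
    φ.toFun s '' J ∈ compsSharp P ∨ φ.toFun s '' J ⊆ interior P)

/-- The iterated partitions: `iterBP φ S P (l-1)` is `P^l`, so
`P¹ = P` and `P^{l+1} = ⋂_{s ∈ S ∪ {e}} φ(s) P^l`. -/
def iterBP {Γ : Type} [Group Γ] (φ : RGp Γ) (S : Set Γ) (P : Set S1) : ℕ → Set S1
  | 0 => P
  | n + 1 => ⋂ s ∈ insert (1 : Γ) S, φ.toFun s '' iterBP φ S P n

/-- `P^∞ = ⋂_l P^l`. -/
def PinfBP {Γ : Type} [Group Γ] (φ : RGp Γ) (S : Set Γ) (P : Set S1) : Set S1 :=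
  ⋂ n, iterBP φ S P n

/-- `lev(J) = l`: `J ⊆ P^l_♯` but `J ⊄ P^m_♯` for `1 ≤ m < l`. -/
def HasLevel {Γ : Type} [Group Γ] (φ : RGp Γ) (S : Set Γ) (P : Set S1)
    (J : Set S1) (l : ℕ) : Prop :=
  1 ≤ l ∧ J ⊆ sharpSet (iterBP φ S P (l - 1)) ∧
    ∀ m, 1 ≤ m → m < l → ¬ J ⊆ sharpSet (iterBP φ S P (m - 1))


/-!
Call the components of the complement of `P^{n+1}` its gaps. The points of `P_* = P ∩ P_♯` lie in
`P^∞`: the points of `P` from which the generators expanding the successive components of `P`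
lead into `P_*` form, by the axioms of a basic partition, a set invariant under every generator.
Hence the endpoints of all gaps lie in `P^∞`, the generators map gaps of `P^{n+1}` onto gaps of
`P^{n+2}`, and every gap of `P^{n+2}` arises this way. A gap `C` first appearing in `P^{n+2}` lies
in a component `I` of `P`; by induction on `n`, the generator expanding `I` maps `C` onto a gap
first appearing in `P^{n+1}`, while any other generator `w` maps `C` into a component expanded by
`w⁻¹`, onto a gap first appearing in `P^{n+3}` (an earlier gap would be brought back by `w⁻¹` to a
gap earlier than `C`). A component of `P^∞_♯` is the closure of a gap of `P^∞`, and its level is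
the index at which that gap first appears.
-/

open Set Topology

instance : LocallyPathConnectedSpace S1 :=
  LocallyPathConnectedSpace.coinduced (X := ℝ) QuotientAddGroup.mk

section Components

variable {U X A C C' D : Set S1} {x : S1}

theorem nonempty_of_mem_compsOf (hC : C ∈ compsOf U) : C.Nonempty := by
  obtain ⟨x, hx, rfl⟩ := hC
  exact ⟨x, mem_connectedComponentIn hx⟩

theorem subset_of_mem_compsOf (hC : C ∈ compsOf U) : C ⊆ U := by
  obtain ⟨x, -, rfl⟩ := hC
  exact connectedComponentIn_subset _ _

theorem isPreconnected_of_mem_compsOf (hC : C ∈ compsOf U) : IsPreconnected C := by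
  obtain ⟨x, -, rfl⟩ := hC
  exact isPreconnected_connectedComponentIn

theorem isOpen_of_mem_compsOf (hU : IsOpen U) (hC : C ∈ compsOf U) : IsOpen C := by
  obtain ⟨x, -, rfl⟩ := hC
  exact hU.connectedComponentIn

theorem subset_of_mem_compsOf_of_mem (hC : C ∈ compsOf U) (hD : IsPreconnected D)
    (hDU : D ⊆ U) (hxD : x ∈ D) (hxC : x ∈ C) : D ⊆ C := by
  obtain ⟨y, -, rfl⟩ := hC
  rw [connectedComponentIn_eq hxC]
  exact hD.subset_connectedComponentIn hxD hDU

theorem eq_of_mem_compsOf (hC : C ∈ compsOf U) (hC' : C' ∈ compsOf U) (hx : x ∈ C)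
    (hx' : x ∈ C') : C = C' :=
  (subset_of_mem_compsOf_of_mem hC' (isPreconnected_of_mem_compsOf hC)
      (subset_of_mem_compsOf hC) hx hx').antisymm
    (subset_of_mem_compsOf_of_mem hC (isPreconnected_of_mem_compsOf hC')
      (subset_of_mem_compsOf hC') hx' hx)

theorem mem_compsOf_of_subset {V : Set S1} (hC : C ∈ compsOf V) (hUV : U ⊆ V) (hCU : C ⊆ U) :
    C ∈ compsOf U := by
  obtain ⟨x, hx⟩ := nonempty_of_mem_compsOf hC
  refine ⟨x, hCU hx, ((isPreconnected_of_mem_compsOf hC).subset_connectedComponentIn hx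
    hCU).antisymm ?_⟩
  exact subset_of_mem_compsOf_of_mem hC isPreconnected_connectedComponentIn
    ((connectedComponentIn_subset _ _).trans hUV) (mem_connectedComponentIn (hCU hx)) hx

theorem image_mem_compsOf (f : S1 ≃ₜ S1) (hC : C ∈ compsOf U) : f '' C ∈ compsOf (f '' U) := by
  obtain ⟨x, hx, rfl⟩ := hC
  exact ⟨f x, mem_image_of_mem f hx, f.image_connectedComponentIn hx⟩

theorem closure_diff_subset_of_mem_compsOf_compl (hX : IsClosed X) (hC : C ∈ compsOf Xᶜ) :
    closure C \ C ⊆ X := by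
  rintro y ⟨hyC, hyn⟩
  by_contra hyX
  obtain ⟨z, hzy, hzC⟩ := mem_closure_iff.1 hyC _ hX.isOpen_compl.connectedComponentIn
    (mem_connectedComponentIn hyX)
  exact hyn (eq_of_mem_compsOf ⟨y, hyX, rfl⟩ hC hzy hzC ▸ mem_connectedComponentIn hyX)

theorem mem_compsOf_compl_of_closure_diff_subset (hA : IsOpen A) (hAne : A.Nonempty)
    (hAconn : IsPreconnected A) (hAX : A ⊆ Xᶜ) (hres : closure A \ A ⊆ X) : A ∈ compsOf Xᶜ := by
  obtain ⟨x, hx⟩ := hAne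
  refine ⟨x, hAX hx, (hAconn.subset_connectedComponentIn hx hAX).antisymm ?_⟩
  refine isPreconnected_connectedComponentIn.subset_of_closure_inter_subset hA
    ⟨x, mem_connectedComponentIn (hAX hx), hx⟩ fun y ⟨hyA, hyK⟩ => ?_
  by_contra hy
  exact connectedComponentIn_subset _ _ hyK (hres ⟨hyA, hy⟩)

theorem closure_subset_sharpSet (hC : C ∈ compsOf Xᶜ) : closure C ⊆ sharpSet X :=
  fun _ hy => ⟨closure C, ⟨C, hC, rfl⟩, hy⟩

theorem mem_sharpSet_of_mem_closure (hA : IsPreconnected A) (hAX : A ⊆ Xᶜ)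
    (hx : x ∈ closure A) : x ∈ sharpSet X := by
  obtain ⟨y, hy⟩ : A.Nonempty := closure_nonempty_iff.1 ⟨x, hx⟩
  exact closure_subset_sharpSet ⟨y, hAX hy, rfl⟩
    (closure_mono (hA.subset_connectedComponentIn hy hAX) hx)

end Components

section Arcs

theorem continuous_coe_S1 : Continuous (fun t : ℝ => (t : S1)) := continuous_quotient_mk'

theorem isOpenMap_coe_S1 : IsOpenMap (fun t : ℝ => (t : S1)) := QuotientAddGroup.isOpenMap_coe

theorem IsClosedArc.isClosed {I : Set S1} (hI : IsClosedArc I) : IsClosed I := by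
  obtain ⟨a, b, -, -, rfl⟩ := hI
  exact (isCompact_Icc.image continuous_coe_S1).isClosed

theorem IsClosedArc.isPreconnected {I : Set S1} (hI : IsClosedArc I) : IsPreconnected I := by
  obtain ⟨a, b, -, -, rfl⟩ := hI
  exact isPreconnected_Icc.image _ continuous_coe_S1.continuousOn

theorem exists_isClosed_disjoint_sUnion_eq {α : Type*} [TopologicalSpace α]
    {𝒞 : Finset (Set α)} (hcl : ∀ X ∈ 𝒞, IsClosed X) (hdisj : (𝒞 : Set (Set α)).Pairwise Disjoint)
    {X : Set α} (hX : X ∈ 𝒞) :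
    ∃ Y, IsClosed Y ∧ Disjoint X Y ∧ ⋃₀ (𝒞 : Set (Set α)) = X ∪ Y := by
  classical
  refine ⟨⋃₀ ((𝒞.erase X : Finset (Set α)) : Set (Set α)), ?_, ?_, ?_⟩
  · rw [sUnion_eq_biUnion]
    exact isClosed_biUnion_finset fun Z hZ => hcl Z (Finset.mem_of_mem_erase hZ)
  · exact disjoint_sUnion_right.2 fun Z hZ =>
      hdisj hX (Finset.mem_of_mem_erase hZ) (Finset.ne_of_mem_erase hZ).symm
  · conv_lhs => rw [← Finset.insert_erase hX]
    rw [Finset.coe_insert, sUnion_insert]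

variable {P C : Set S1}

theorem FinDisjClosedArcs.isClosed (h : FinDisjClosedArcs P) : IsClosed P := by
  obtain ⟨𝒞, harc, -, rfl⟩ := h
  rw [sUnion_eq_biUnion]
  exact isClosed_biUnion_finset fun X hX => (harc X hX).isClosed

theorem FinDisjClosedArcs.isClosedArc_of_mem_compsOf (h : FinDisjClosedArcs P)
    (hC : C ∈ compsOf P) : IsClosedArc C := by
  obtain ⟨𝒞, harc, hdisj, rfl⟩ := h
  obtain ⟨x, hx⟩ := nonempty_of_mem_compsOf hC
  obtain ⟨X, hX, hxX⟩ := subset_of_mem_compsOf hC hx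
  obtain ⟨Y, hY, hXY, hPXY⟩ :=
    exists_isClosed_disjoint_sUnion_eq (fun Z hZ => (harc Z hZ).isClosed) hdisj hX
  have hCX : C ⊆ X := by
    rcases isPreconnected_iff_subset_of_disjoint_closed.1 (isPreconnected_of_mem_compsOf hC) X Y
      (harc X hX).isClosed hY (hPXY ▸ subset_of_mem_compsOf hC)
      (by rw [hXY.inter_eq, inter_empty]) with h | h
    · exact h
    · exact absurd (h hx) (disjoint_left.1 hXY hxX)
  rw [hCX.antisymm (subset_of_mem_compsOf_of_mem hC (harc X hX).isPreconnected
    (subset_sUnion_of_mem hX) hxX hx)]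
  exact harc X hX

theorem coe_notMem_image_Icc {a b u : ℝ} (hu : u ∈ Ioo b (a + 1)) :
    (u : S1) ∉ (fun t : ℝ => (t : S1)) '' Icc a b := by
  rintro ⟨t, ht, htu⟩
  have := (AddCircle.coe_eq_coe_iff_of_mem_Ico (p := (1 : ℝ)) (a := a)
    ⟨ht.1, by linarith [ht.2, hu.1, hu.2]⟩ ⟨by linarith [ht.1, ht.2, hu.1], hu.2⟩).1 htu
  linarith [ht.2, hu.1]

/-- The points of `P` on its topological boundary are endpoints of arcs, hence limits of an
open arc of `Pᶜ` on the far side of the endpoint. -/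
theorem FinDisjClosedArcs.diff_interior_subset_sharpSet (h : FinDisjClosedArcs P) :
    P \ interior P ⊆ sharpSet P := by
  rintro x ⟨hxP, hxi⟩
  obtain ⟨𝒞, harc, hdisj, rfl⟩ := h
  obtain ⟨X, hX, hxX⟩ := hxP
  obtain ⟨Y, hY, hXY, hPXY⟩ :=
    exists_isClosed_disjoint_sUnion_eq (fun Z hZ => (harc Z hZ).isClosed) hdisj hX
  obtain ⟨a, b, hab, hba, rfl⟩ := harc X hX
  obtain ⟨t, ht, rfl⟩ := hxX
  -- a lift of `x` in the closure of `Ioo b (a + 1)`, whose image is the complement of the arc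
  obtain ⟨t', ht', htt'⟩ : ∃ t' ∈ Icc b (a + 1), (t' : S1) = t := by
    rcases ht.1.eq_or_lt with hat | hat
    · exact ⟨a + 1, ⟨by linarith, le_rfl⟩, by rw [AddCircle.coe_add_period, hat]⟩
    rcases ht.2.eq_or_lt with htb | htb
    · exact ⟨b, ⟨le_rfl, by linarith⟩, by rw [htb]⟩
    refine absurd (interior_maximal ?_ (isOpenMap_coe_S1 _ isOpen_Ioo)
      (mem_image_of_mem _ ⟨hat, htb⟩)) hxi
    rw [hPXY]
    exact (image_mono Ioo_subset_Icc_self).trans subset_union_left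
  obtain ⟨δ, hδ, hball⟩ := Metric.isOpen_iff.1 (hY.isOpen_compl.preimage continuous_coe_S1)
    t' (by simpa [htt'] using disjoint_left.1 hXY (mem_image_of_mem _ ht))
  rw [Real.ball_eq_Ioo] at hball
  refine mem_sharpSet_of_mem_closure (A := (fun t : ℝ => (t : S1)) '' (Ioo (t' - δ) (t' + δ) ∩
    Ioo b (a + 1))) ((ordConnected_Ioo.inter ordConnected_Ioo).isPreconnected.image _
      continuous_coe_S1.continuousOn) ?_ ?_
  · rintro _ ⟨u, hu, rfl⟩ huP
    rw [hPXY] at huP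
    exact huP.elim (coe_notMem_image_Icc hu.2) (hball hu.1)
  · show ((t : ℝ) : S1) ∈ _
    rw [← htt']
    refine image_closure_subset_closure_image continuous_coe_S1
      (mem_image_of_mem _ (isOpen_Ioo.inter_closure ⟨?_, ?_⟩))
    · exact ⟨by linarith, by linarith⟩
    · rwa [closure_Ioo (by linarith : b ≠ a + 1)]

end Arcs

namespace S1

@[simp]
theorem coe_homeomorph_one : ⇑(1 : S1 ≃ₜ S1) = id := rfl

@[simp]
theorem coe_homeomorph_inv (f : S1 ≃ₜ S1) : ⇑f⁻¹ = f.symm := rfl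

end S1

namespace RGp

variable {Γ : Type} [Group Γ] (φ : RGp Γ)

theorem image_inv_image (g : Γ) (A : Set S1) : φ.toFun g⁻¹ '' (φ.toFun g '' A) = A := by
  simp [image_image]

theorem image_image_inv (g : Γ) (A : Set S1) : φ.toFun g '' (φ.toFun g⁻¹ '' A) = A := by
  simp [image_image]

theorem mem_image_iff (g : Γ) (A : Set S1) (y : S1) :
    y ∈ φ.toFun g '' A ↔ φ.toFun g⁻¹ y ∈ A := by
  simp [Homeomorph.image_eq_preimage_symm]

end RGp

section Iterates

variable {Γ : Type} [Group Γ] {φ : RGp Γ} {S : Set Γ} {P : Set S1}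

theorem iterBP_succ_subset_image {n : ℕ} {s : Γ} (hs : s ∈ insert 1 S) :
    iterBP φ S P (n + 1) ⊆ φ.toFun s '' iterBP φ S P n :=
  biInter_subset_of_mem hs

theorem iterBP_antitone : Antitone (iterBP φ S P) :=
  antitone_nat_of_succ_le fun n => by
    simpa using iterBP_succ_subset_image (φ := φ) (P := P) (n := n) (mem_insert 1 S)

theorem compl_iterBP_succ (n : ℕ) :
    (iterBP φ S P (n + 1))ᶜ = ⋃ s ∈ insert (1 : Γ) S, φ.toFun s '' (iterBP φ S P n)ᶜ := by
  simp only [iterBP, compl_iInter, image_compl_eq (φ.toFun _).bijective]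

theorem isClosed_iterBP (hP : FinDisjClosedArcs P) (n : ℕ) : IsClosed (iterBP φ S P n) := by
  induction n with
  | zero => exact hP.isClosed
  | succ n ih => exact isClosed_biInter fun s _ => (φ.toFun s).isClosedMap _ ih

theorem PinfBP_subset_iterBP (n : ℕ) : PinfBP φ S P ⊆ iterBP φ S P n :=
  iInter_subset _ n

theorem subset_PinfBP (hsym : ∀ s ∈ S, s⁻¹ ∈ S) {A : Set S1} (hAP : A ⊆ P)
    (hA : ∀ s ∈ S, MapsTo (φ.toFun s) A A) : A ⊆ PinfBP φ S P := by
  refine subset_iInter fun n => ?_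
  induction n with
  | zero => exact hAP
  | succ n ih =>
    refine subset_iInter₂ fun s hs x hx => (φ.mem_image_iff s _ x).2 (ih ?_)
    rcases hs with rfl | hs
    · simpa using hx
    · exact hA _ (hsym s hs) hx

theorem mapsTo_PinfBP (hsym : ∀ s ∈ S, s⁻¹ ∈ S) {s : Γ} (hs : s ∈ S) :
    MapsTo (φ.toFun s) (PinfBP φ S P) (PinfBP φ S P) := fun x hx =>
  mem_iInter.2 fun n => by
    simpa using (φ.mem_image_iff _ _ _).1
      (iterBP_succ_subset_image (mem_insert_of_mem 1 (hsym s hs)) (mem_iInter.1 hx (n + 1)))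

theorem image_PinfBP (hsym : ∀ s ∈ S, s⁻¹ ∈ S) {s : Γ} (hs : s ∈ S) :
    φ.toFun s '' PinfBP φ S P = PinfBP φ S P :=
  (mapsTo_PinfBP hsym hs).image_subset.antisymm fun x hx =>
    ⟨_, mapsTo_PinfBP hsym (hsym s hs) hx, by simp⟩

theorem image_mem_compsOf_compl_PinfBP (hsym : ∀ s ∈ S, s⁻¹ ∈ S) {s : Γ} (hs : s ∈ S)
    {C : Set S1} (hC : C ∈ compsOf (PinfBP φ S P)ᶜ) :
    φ.toFun s '' C ∈ compsOf (PinfBP φ S P)ᶜ := by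
  simpa only [image_compl_eq (φ.toFun s).bijective, image_PinfBP hsym hs] using
    image_mem_compsOf (φ.toFun s) hC

end Iterates

namespace IsBP

variable {Γ : Type} [Group Γ] {φ : RGp Γ} {S : Set Γ} {P C I I' : Set S1} {v e : Γ}

theorem not_subsingleton_of_mem_compsOf (hP : IsBP φ S P) (hI : I ∈ compsOf P) :
    ¬ I.Subsingleton := by
  intro hsub
  obtain ⟨s, ⟨_, l, hl, Is, _, hinj, _, hIs, _, himg⟩, _⟩ := hP.2.1 I hI
  have hmem : ∀ i, Is i ⊆ φ.toFun s '' I := fun i =>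
    himg ▸ subset_union_of_subset_left (subset_iUnion Is i) _
  obtain ⟨x₀, hx₀⟩ := nonempty_of_mem_compsOf (hIs ⟨0, by omega⟩)
  obtain ⟨x₁, hx₁⟩ := nonempty_of_mem_compsOf (hIs ⟨1, by omega⟩)
  have h01 := hinj (eq_of_mem_compsOf (hIs _) (hIs _) hx₀
    ((hsub.image _) (hmem _ hx₁) (hmem _ hx₀) ▸ hx₁))
  simp at h01

theorem subset_closure_interior (hP : IsBP φ S P) : P ⊆ closure (interior P) := by
  intro x hxP
  have hI : connectedComponentIn P x ∈ compsOf P := ⟨x, hxP, rfl⟩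
  obtain ⟨a, b, hab, -, hIeq⟩ := hP.1.isClosedArc_of_mem_compsOf hI
  have hab' : a < b := hab.lt_of_ne fun h => hP.not_subsingleton_of_mem_compsOf hI <| by
    rw [hIeq, h, Icc_self, image_singleton]
    exact subsingleton_singleton
  have hopen : (fun t : ℝ => (t : S1)) '' Ioo a b ⊆ interior P :=
    interior_maximal ((image_mono Ioo_subset_Icc_self).trans
      (hIeq ▸ connectedComponentIn_subset P x)) (isOpenMap_coe_S1 _ isOpen_Ioo)
  have hx : x ∈ (fun t : ℝ => (t : S1)) '' closure (Ioo a b) := by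
    rw [closure_Ioo hab'.ne, ← hIeq]
    exact mem_connectedComponentIn hxP
  exact closure_mono hopen (image_closure_subset_closure_image continuous_coe_S1 hx)

/-- A point of `P` in the interior of `closure C` would have points of `interior P` nearby, and
these would have to lie in `C`. -/
theorem interior_closure_eq (hP : IsBP φ S P) (hC : C ∈ compsOf Pᶜ) :
    interior (closure C) = C := by
  refine (interior_maximal subset_closure
    (isOpen_of_mem_compsOf hP.1.isClosed.isOpen_compl hC)).antisymm' fun z hz => ?_
  by_contra hzC
  obtain ⟨y, hy, hyP⟩ := mem_closure_iff.1
    (hP.subset_closure_interior (closure_diff_subset_of_mem_compsOf_compl hP.1.isClosed hC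
      ⟨interior_subset hz, hzC⟩)) _ isOpen_interior hz
  obtain ⟨w, hwP, hwC⟩ := mem_closure_iff.1 (interior_subset hy) _ isOpen_interior hyP
  exact subset_of_mem_compsOf hC hwC (interior_subset hwP)

theorem expander_unique (hP : IsBP φ S P) (hI : I ∈ compsOf P) (hv : v ∈ S)
    (hexpv : ExpandsAt φ P I v) (he : e ∈ S) (hexpe : ExpandsAt φ P I e) : v = e :=
  (hP.2.1 I hI).unique ⟨hv, hexpv⟩ ⟨he, hexpe⟩

/-- If `v` contracted `I'` as well, then `I ⊆ φ(v⁻¹) I' ⊊ I''` would force `I'' = I`, and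
then `I' ⊆ φ(v) I`, against `φ(v) I ⊊ I'`. -/
theorem expands_inv_of_ssubset (hP : IsBP φ S P) (hsym : ∀ s ∈ S, s⁻¹ ∈ S)
    (hI : I ∈ compsOf P) (hI' : I' ∈ compsOf P) (hv : v ∈ S) (hss : φ.toFun v '' I ⊂ I') :
    ExpandsAt φ P I' v⁻¹ := by
  by_contra hne
  obtain ⟨I'', hI'', hss'⟩ := hP.2.2.1 I' hI' v⁻¹ (hsym v hv) hne
  have hII' : I ⊆ φ.toFun v⁻¹ '' I' :=
    φ.image_inv_image v I ▸ image_mono hss.subset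
  obtain ⟨y, hy⟩ := nonempty_of_mem_compsOf hI
  have hI''I : I'' = I := eq_of_mem_compsOf hI'' hI (hss'.subset (hII' hy)) hy
  refine hss.not_subset ?_
  exact φ.image_image_inv v I' ▸ image_mono (hI''I ▸ hss'.subset)

theorem expands_inv_of_image_closure_subset (hP : IsBP φ S P) (hsym : ∀ s ∈ S, s⁻¹ ∈ S)
    (hC : C ∈ compsOf Pᶜ) (hI : I ∈ compsOf P) (hv : v ∈ S)
    (hsub : φ.toFun v '' closure C ⊆ I) : ExpandsAt φ P I v⁻¹ := by
  by_contra hne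
  obtain ⟨I', hI', hss⟩ := hP.2.2.1 I hI v⁻¹ (hsym v hv) hne
  obtain ⟨y, hy⟩ := nonempty_of_mem_compsOf hC
  have := hss.subset (mem_image_of_mem _ (hsub (mem_image_of_mem _ (subset_closure hy))))
  simp only [map_inv, S1.coe_homeomorph_inv, Homeomorph.symm_apply_apply] at this
  exact subset_of_mem_compsOf hC hy (subset_of_mem_compsOf hI' this)

end IsBP
/-- The points of `P` from which the expanding generators of the successive components lead
into `P_* = P ∩ P_♯`. They form an `S`-invariant subset of `P`, hence of `P^∞`. -/
inductive ReachesStar {Γ : Type} [Group Γ] (φ : RGp Γ) (S : Set Γ) (P : Set S1) : S1 → Prop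
  | star {x : S1} : x ∈ starSet P → ReachesStar φ S P x
  | expand {x : S1} {I : Set S1} {e : Γ} : I ∈ compsOf P → x ∈ I → e ∈ S →
      ExpandsAt φ P I e → ReachesStar φ S P (φ.toFun e x) → ReachesStar φ S P x

section ReachesStar

variable {Γ : Type} [Group Γ] {φ : RGp Γ} {S : Set Γ} {P : Set S1} {x : S1} {v : Γ}

theorem ReachesStar.mem (hx : ReachesStar φ S P x) : x ∈ P := by
  cases hx with
  | star h => exact h.1
  | expand hI hxI => exact subset_of_mem_compsOf hI hxI

theorem IsBP.reachesStar_apply_of_mem_starSet (hP : IsBP φ S P) (hsym : ∀ s ∈ S, s⁻¹ ∈ S)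
    (hx : x ∈ starSet P) (hv : v ∈ S) : ReachesStar φ S P (φ.toFun v x) := by
  obtain ⟨hxP, _, ⟨C, hC, rfl⟩, hxC⟩ := hx
  have hvx : φ.toFun v x ∈ φ.toFun v '' closure C := mem_image_of_mem _ hxC
  rcases hP.2.2.2 (closure C) ⟨C, hC, rfl⟩ v hv with ⟨C', hC', heq⟩ | hint
  · have hCC' : φ.toFun v '' C = C' := by
      rw [← hP.interior_closure_eq hC, (φ.toFun v).image_interior, heq,
        hP.interior_closure_eq hC']
    have hvxC' : φ.toFun v x ∉ C' := by
      rw [← hCC', (φ.toFun v).injective.mem_set_image]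
      exact fun h => subset_of_mem_compsOf hC h hxP
    rw [heq] at hvx
    exact .star ⟨closure_diff_subset_of_mem_compsOf_compl hP.1.isClosed hC' ⟨hvx, hvxC'⟩,
      closure_subset_sharpSet hC' hvx⟩
  · have hvxP : φ.toFun v x ∈ P := interior_subset (hint hvx)
    have hI : connectedComponentIn P (φ.toFun v x) ∈ compsOf P := ⟨_, hvxP, rfl⟩
    have hsub : φ.toFun v '' closure C ⊆ connectedComponentIn P (φ.toFun v x) :=
      ((isPreconnected_of_mem_compsOf hC).closure.image _
        (φ.toFun v).continuous.continuousOn).subset_connectedComponentIn hvx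
        (hint.trans interior_subset)
    refine .expand hI (mem_connectedComponentIn hvxP) (hsym v hv)
      (hP.expands_inv_of_image_closure_subset hsym hC hI hv hsub) ?_
    simpa using ReachesStar.star ⟨hxP, closure_subset_sharpSet hC hxC⟩

theorem IsBP.reachesStar_apply (hP : IsBP φ S P) (hsym : ∀ s ∈ S, s⁻¹ ∈ S)
    (hx : ReachesStar φ S P x) (hv : v ∈ S) : ReachesStar φ S P (φ.toFun v x) := by
  cases hx with
  | star h => exact hP.reachesStar_apply_of_mem_starSet hsym h hv
  | @expand _ I e hI hxI he hexp hnext =>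
    by_cases hve : v = e
    · exact hve ▸ hnext
    obtain ⟨I', hI', hss⟩ :=
      hP.2.2.1 I hI v hv fun h => hve (hP.expander_unique hI hv h he hexp)
    refine .expand hI' (hss.subset (mem_image_of_mem _ hxI)) (hsym v hv)
      (hP.expands_inv_of_ssubset hsym hI hI' hv hss) ?_
    simpa using ReachesStar.expand hI hxI he hexp hnext

theorem IsBP.starSet_subset_PinfBP (hP : IsBP φ S P) (hsym : ∀ s ∈ S, s⁻¹ ∈ S) :
    starSet P ⊆ PinfBP φ S P := fun _ hx =>
  subset_PinfBP (A := {x | ReachesStar φ S P x}) hsym (fun _ h => h.mem)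
    (fun _ hs _ h => hP.reachesStar_apply hsym h hs) (ReachesStar.star hx)

theorem IsBP.diff_interior_subset_PinfBP (hP : IsBP φ S P) (hsym : ∀ s ∈ S, s⁻¹ ∈ S) :
    P \ interior P ⊆ PinfBP φ S P := fun _ hx =>
  hP.starSet_subset_PinfBP hsym ⟨hx.1, hP.1.diff_interior_subset_sharpSet hx⟩

end ReachesStar

/-- The gaps of `P^{n+1}` (not of `P^n`: the index is shifted as for `iterBP`). -/
def iterGaps {Γ : Type} [Group Γ] (φ : RGp Γ) (S : Set Γ) (P : Set S1) (n : ℕ) :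
    Set (Set S1) :=
  compsOf (iterBP φ S P n)ᶜ

section Gaps

variable {Γ : Type} [Group Γ] {φ : RGp Γ} {S : Set Γ} {P C : Set S1} {n : ℕ} {v : Γ}

theorem image_mem_iterGaps_succ_of_closure_diff_subset (hP : IsBP φ S P)
    (hsym : ∀ s ∈ S, s⁻¹ ∈ S) (hC : C ∈ iterGaps φ S P n)
    (hres : closure C \ C ⊆ PinfBP φ S P) (hv : v ∈ insert 1 S) :
    φ.toFun v '' C ∈ iterGaps φ S P (n + 1) := by
  have hQ := isClosed_iterBP (φ := φ) (S := S) hP.1 n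
  refine mem_compsOf_compl_of_closure_diff_subset
    ((φ.toFun v).isOpenMap _ (isOpen_of_mem_compsOf hQ.isOpen_compl hC))
    ((nonempty_of_mem_compsOf hC).image _)
    ((isPreconnected_of_mem_compsOf hC).image _ (φ.toFun v).continuous.continuousOn) ?_ ?_
  · rw [compl_iterBP_succ]
    exact (image_mono (subset_of_mem_compsOf hC)).trans
      (subset_biUnion_of_mem (u := fun s => φ.toFun s '' (iterBP φ S P n)ᶜ) hv)
  · rw [← (φ.toFun v).image_closure, ← image_sdiff (φ.toFun v).injective]
    refine (image_mono hres).trans (Subset.trans ?_ (PinfBP_subset_iterBP (n + 1)))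
    rcases hv with rfl | hv
    · simp
    · exact (mapsTo_PinfBP hsym hv).image_subset

theorem exists_eq_image_of_mem_iterGaps_succ_of_closure_diff_subset (hP : IsBP φ S P)
    (hsym : ∀ s ∈ S, s⁻¹ ∈ S) (hres : ∀ D ∈ iterGaps φ S P n, closure D \ D ⊆ PinfBP φ S P)
    (hC : C ∈ iterGaps φ S P (n + 1)) :
    ∃ v ∈ insert 1 S, ∃ D ∈ iterGaps φ S P n, C = φ.toFun v '' D := by
  obtain ⟨x, hx⟩ := nonempty_of_mem_compsOf hC
  have hx' := subset_of_mem_compsOf hC hx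
  rw [compl_iterBP_succ, mem_iUnion₂] at hx'
  obtain ⟨v, hv, y, hy, rfl⟩ := hx'
  have hD : connectedComponentIn (iterBP φ S P n)ᶜ y ∈ iterGaps φ S P n := ⟨y, hy, rfl⟩
  exact ⟨v, hv, _, hD, eq_of_mem_compsOf hC
    (image_mem_iterGaps_succ_of_closure_diff_subset hP hsym hD (hres _ hD) hv) hx
    (mem_image_of_mem _ (mem_connectedComponentIn hy))⟩

theorem closure_diff_subset_PinfBP (hP : IsBP φ S P) (hsym : ∀ s ∈ S, s⁻¹ ∈ S) (n : ℕ) :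
    ∀ C ∈ iterGaps φ S P n, closure C \ C ⊆ PinfBP φ S P := by
  induction n with
  | zero =>
    intro C hC x hx
    exact hP.starSet_subset_PinfBP hsym
      ⟨closure_diff_subset_of_mem_compsOf_compl hP.1.isClosed hC hx,
        closure_subset_sharpSet hC hx.1⟩
  | succ n ih =>
    intro C hC
    obtain ⟨v, hv, D, hD, rfl⟩ :=
      exists_eq_image_of_mem_iterGaps_succ_of_closure_diff_subset hP hsym ih hC
    rw [← (φ.toFun v).image_closure, ← image_sdiff (φ.toFun v).injective]
    rcases hv with rfl | hv
    · simpa using ih D hD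
    · exact (image_mono (ih D hD)).trans (mapsTo_PinfBP hsym hv).image_subset

theorem image_mem_iterGaps_succ (hP : IsBP φ S P) (hsym : ∀ s ∈ S, s⁻¹ ∈ S)
    (hC : C ∈ iterGaps φ S P n) (hv : v ∈ insert 1 S) :
    φ.toFun v '' C ∈ iterGaps φ S P (n + 1) :=
  image_mem_iterGaps_succ_of_closure_diff_subset hP hsym hC
    (closure_diff_subset_PinfBP hP hsym n C hC) hv

theorem iterGaps_mono (hP : IsBP φ S P) (hsym : ∀ s ∈ S, s⁻¹ ∈ S) :
    Monotone (iterGaps φ S P) :=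
  monotone_nat_of_le_succ fun _ C hC => by
    simpa using image_mem_iterGaps_succ hP hsym hC (mem_insert 1 S)

theorem exists_mem_eq_image_of_mem_iterGaps_succ (hP : IsBP φ S P) (hsym : ∀ s ∈ S, s⁻¹ ∈ S)
    (hC : C ∈ iterGaps φ S P (n + 1)) (hCn : C ∉ iterGaps φ S P n) :
    ∃ v ∈ S, ∃ D ∈ iterGaps φ S P n, C = φ.toFun v '' D := by
  obtain ⟨v, hv | hv, D, hD, rfl⟩ :=
    exists_eq_image_of_mem_iterGaps_succ_of_closure_diff_subset hP hsym
      (closure_diff_subset_PinfBP hP hsym n) hC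
  · subst hv
    exact absurd (by simpa using hD) hCn
  · exact ⟨v, hv, D, hD, rfl⟩

/-- A gap of some `P^{n+1}` meets `P` only in `interior P`, since `P \ interior P ⊆ P^∞`; being
connected, it is then a gap of `P` or lies inside a single component of `P`. -/
theorem exists_mem_compsOf_subset (hP : IsBP φ S P) (hsym : ∀ s ∈ S, s⁻¹ ∈ S)
    (hC : C ∈ iterGaps φ S P n) (hC₀ : C ∉ iterGaps φ S P 0) :
    ∃ I ∈ compsOf P, C ⊆ I := by
  have hsplit : C ⊆ Pᶜ ∪ interior P := fun x hx => by
    by_contra h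
    simp only [mem_union, mem_compl_iff, not_or, not_not] at h
    exact subset_of_mem_compsOf hC hx
      (PinfBP_subset_iterBP n (hP.diff_interior_subset_PinfBP hsym ⟨h.1, h.2⟩))
  rcases (isPreconnected_of_mem_compsOf hC).subset_or_subset hP.1.isClosed.isOpen_compl
    isOpen_interior (disjoint_compl_left.mono_right interior_subset) hsplit with h | h
  · exact absurd (mem_compsOf_of_subset hC
      (compl_subset_compl.2 (iterBP_antitone (Nat.zero_le n))) h) hC₀
  · obtain ⟨x, hx⟩ := nonempty_of_mem_compsOf hC
    exact ⟨_, ⟨x, interior_subset (h hx), rfl⟩,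
      (isPreconnected_of_mem_compsOf hC).subset_connectedComponentIn hx
        (h.trans interior_subset)⟩

end Gaps

section NewGaps

variable {Γ : Type} [Group Γ] {φ : RGp Γ} {S : Set Γ} {P : Set S1}

/-- Write `C = φ(v) D` with `D` a gap of `P^{n+1}`. By induction, the generator `v` does not
expand the component of `P` containing `D`, so `v⁻¹` expands the component `I` containing
`φ(v) D`; hence `e = v⁻¹` and `φ(e) C = D`. -/
theorem image_mem_iterGaps_of_expandsAt (hP : IsBP φ S P) (hsym : ∀ s ∈ S, s⁻¹ ∈ S) (n : ℕ) :
    ∀ {C I : Set S1} {e : Γ}, C ∈ iterGaps φ S P (n + 1) → C ∉ iterGaps φ S P n →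
      I ∈ compsOf P → C ⊆ I → e ∈ S → ExpandsAt φ P I e →
      φ.toFun e '' C ∈ iterGaps φ S P n := by
  induction n with
  | zero =>
    intro C I e hC hCn hI hCI he hexp
    obtain ⟨v, hv, D, hD, rfl⟩ := exists_mem_eq_image_of_mem_iterGaps_succ hP hsym hC hCn
    have hvI : ExpandsAt φ P I v⁻¹ :=
      hP.expands_inv_of_image_closure_subset hsym hD hI hv <| by
        rw [(φ.toFun v).image_closure]
        exact closure_minimal hCI (hP.1.isClosedArc_of_mem_compsOf hI).isClosed
    rwa [hP.expander_unique hI he hexp (hsym v hv) hvI, φ.image_inv_image]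
  | succ n ih =>
    intro C I e hC hCn hI hCI he hexp
    obtain ⟨v, hv, D, hD, rfl⟩ := exists_mem_eq_image_of_mem_iterGaps_succ hP hsym hC hCn
    have hDn : D ∉ iterGaps φ S P n := fun h =>
      hCn (image_mem_iterGaps_succ hP hsym h (mem_insert_of_mem 1 hv))
    obtain ⟨ID, hID, hDID⟩ := exists_mem_compsOf_subset hP hsym hD
      fun h => hDn (iterGaps_mono hP hsym (Nat.zero_le n) h)
    obtain ⟨eD, ⟨heD, hexpD⟩, -⟩ := hP.2.1 ID hID
    have hvD : ¬ ExpandsAt φ P ID v := fun h =>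
      hCn (hP.expander_unique hID hv h heD hexpD ▸
        iterGaps_mono hP hsym n.le_succ (ih hD hDn hID hDID heD hexpD))
    obtain ⟨I', hI', hss⟩ := hP.2.2.1 ID hID v hv hvD
    obtain ⟨y, hy⟩ := nonempty_of_mem_compsOf hD
    have hI'I : I' = I := eq_of_mem_compsOf hI' hI
      (hss.subset (mem_image_of_mem _ (hDID hy))) (hCI (mem_image_of_mem _ hy))
    have hvI : ExpandsAt φ P I v⁻¹ := hI'I ▸ hP.expands_inv_of_ssubset hsym hID hI' hv hss
    rwa [hP.expander_unique hI he hexp (hsym v hv) hvI, φ.image_inv_image]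

end NewGaps

def IsGapOfLevel {Γ : Type} [Group Γ] (φ : RGp Γ) (S : Set Γ) (P : Set S1) (C : Set S1)
    (n : ℕ) : Prop :=
  C ∈ iterGaps φ S P n ∧ ∀ m < n, C ∉ iterGaps φ S P m

section Levels

variable {Γ : Type} [Group Γ] {φ : RGp Γ} {S : Set Γ} {P C I J : Set S1} {n : ℕ} {e w : Γ}

namespace IsGapOfLevel

theorem exists_mem_compsOf_subset (hP : IsBP φ S P) (hsym : ∀ s ∈ S, s⁻¹ ∈ S)
    (hC : IsGapOfLevel φ S P C (n + 1)) : ∃ I ∈ compsOf P, C ⊆ I :=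
  _root_.exists_mem_compsOf_subset hP hsym hC.1 (hC.2 0 n.succ_pos)

theorem image_of_expandsAt (hP : IsBP φ S P) (hsym : ∀ s ∈ S, s⁻¹ ∈ S)
    (hC : IsGapOfLevel φ S P C (n + 1)) (hI : I ∈ compsOf P) (hCI : C ⊆ I) (he : e ∈ S)
    (hexp : ExpandsAt φ P I e) : IsGapOfLevel φ S P (φ.toFun e '' C) n := by
  refine ⟨image_mem_iterGaps_of_expandsAt hP hsym n hC.1 (hC.2 n n.lt_succ_self) hI hCI he hexp,
    fun m hm h => hC.2 (m + 1) (by omega) ?_⟩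
  simpa only [φ.image_inv_image] using
    image_mem_iterGaps_succ hP hsym h (mem_insert_of_mem 1 (hsym e he))

/-- If `φ(w) C` were a gap of `P^{n+1}`, it would be a gap of some level `m + 1 ≤ n + 1` inside
the component `I'` that `w⁻¹` expands, and `φ(w⁻¹)` would bring it back to a gap of `P^{m+1}`. -/
theorem image_of_not_expandsAt (hP : IsBP φ S P) (hsym : ∀ s ∈ S, s⁻¹ ∈ S)
    (hC : IsGapOfLevel φ S P C (n + 1)) (hI : I ∈ compsOf P) (hCI : C ⊆ I) (hw : w ∈ S)
    (hnexp : ¬ ExpandsAt φ P I w) : IsGapOfLevel φ S P (φ.toFun w '' C) (n + 2) := by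
  refine ⟨image_mem_iterGaps_succ hP hsym hC.1 (mem_insert_of_mem 1 hw), fun k hk hk' => ?_⟩
  have h : φ.toFun w '' C ∈ iterGaps φ S P (n + 1) := iterGaps_mono hP hsym (by omega) hk'
  obtain ⟨I', hI', hss⟩ := hP.2.2.1 I hI w hw hnexp
  have hsub : φ.toFun w '' C ⊆ I' := (image_mono hCI).trans hss.subset
  have h₀ : φ.toFun w '' C ∉ iterGaps φ S P 0 := fun h₀ => by
    obtain ⟨y, hy⟩ := nonempty_of_mem_compsOf h₀
    exact subset_of_mem_compsOf h₀ hy (subset_of_mem_compsOf hI' (hsub hy))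
  obtain ⟨m, hm, hm'⟩ := Nat.exists_not_and_succ_of_not_zero_of_exists
    (p := fun m => φ.toFun w '' C ∈ iterGaps φ S P m) h₀ ⟨_, h⟩
  have hmn : m ≤ n := by
    by_contra hmn
    exact hm (iterGaps_mono hP hsym (by omega) h)
  have := image_mem_iterGaps_of_expandsAt hP hsym m hm' hm hI' hsub (hsym w hw)
    (hP.expands_inv_of_ssubset hsym hI hI' hw hss)
  rw [φ.image_inv_image] at this
  exact hC.2 n n.lt_succ_self (iterGaps_mono hP hsym hmn this)

end IsGapOfLevel

theorem closure_subset_sharpSet_iff (hP : IsBP φ S P) (hsym : ∀ s ∈ S, s⁻¹ ∈ S)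
    (hC : C ∈ compsOf (PinfBP φ S P)ᶜ) (n : ℕ) :
    closure C ⊆ sharpSet (iterBP φ S P n) ↔ C ∈ iterGaps φ S P n := by
  refine ⟨fun h => mem_compsOf_of_subset hC
    (compl_subset_compl.2 (PinfBP_subset_iterBP n)) fun x hxC hxQ => ?_, closure_subset_sharpSet⟩
  obtain ⟨_, ⟨D, hD, rfl⟩, hxD⟩ := h (subset_closure hxC)
  by_cases hx : x ∈ D
  · exact subset_of_mem_compsOf hD hx hxQ
  · exact subset_of_mem_compsOf hC hxC (closure_diff_subset_PinfBP hP hsym n D hD ⟨hxD, hx⟩)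

theorem hasLevel_closure_iff (hP : IsBP φ S P) (hsym : ∀ s ∈ S, s⁻¹ ∈ S)
    (hC : C ∈ compsOf (PinfBP φ S P)ᶜ) (n : ℕ) :
    HasLevel φ S P (closure C) (n + 1) ↔ IsGapOfLevel φ S P C n := by
  simp only [HasLevel, IsGapOfLevel, closure_subset_sharpSet_iff hP hsym hC,
    Nat.add_sub_cancel]
  constructor
  · rintro ⟨-, h, hlt⟩
    exact ⟨h, fun m hm => by simpa using hlt (m + 1) (by omega) (by omega)⟩
  · rintro ⟨h, hlt⟩
    exact ⟨by omega, h, fun m hm hmn => hlt (m - 1) (by omega)⟩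

theorem HasLevel.unique {m : ℕ} (hm : HasLevel φ S P J m) (hn : HasLevel φ S P J n) : m = n := by
  by_contra hne
  rcases Nat.lt_or_gt_of_ne hne with h | h
  · exact hn.2.2 m hm.1 h hm.2.1
  · exact hm.2.2 n hn.1 h hn.2.1

end Levels

theorem level_step_general (Γ : Type) [Group Γ] (S : Set Γ)
    (hsym : ∀ s ∈ S, s⁻¹ ∈ S)
    (φ : RGp Γ) (P : Set S1) (hP : IsBP φ S P)
    (J : Set S1) (hJ : J ∈ compsSharp (PinfBP φ S P))
    (l : ℕ) (hl : 2 ≤ l) (hlev : HasLevel φ S P J l) :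
    (∃! s, s ∈ S ∧ HasLevel φ S P (φ.toFun s '' J) (l - 1)) ∧
    ∀ s ∈ S, ¬ HasLevel φ S P (φ.toFun s '' J) (l - 1) →
      HasLevel φ S P (φ.toFun s '' J) (l + 1) := by
  obtain ⟨C, hC, rfl⟩ := hJ
  obtain ⟨k, rfl⟩ : ∃ k, l = k + 2 := ⟨l - 2, by omega⟩
  have hlevel : ∀ s ∈ S, ∀ n, HasLevel φ S P (φ.toFun s '' closure C) (n + 1) ↔
      IsGapOfLevel φ S P (φ.toFun s '' C) n := fun s hs n => by
    rw [(φ.toFun s).image_closure,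
      hasLevel_closure_iff hP hsym (image_mem_compsOf_compl_PinfBP hsym hs hC)]
  rw [hasLevel_closure_iff hP hsym hC] at hlev
  obtain ⟨I, hI, hCI⟩ := hlev.exists_mem_compsOf_subset hP hsym
  obtain ⟨e, ⟨he, hexp⟩, -⟩ := hP.2.1 I hI
  have hdown : HasLevel φ S P (φ.toFun e '' closure C) (k + 1) :=
    (hlevel e he k).2 (hlev.image_of_expandsAt hP hsym hI hCI he hexp)
  have hup : ∀ s ∈ S, s ≠ e → HasLevel φ S P (φ.toFun s '' closure C) (k + 3) := fun s hs hse =>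
    (hlevel s hs (k + 2)).2 (hlev.image_of_not_expandsAt hP hsym hI hCI hs
      fun h => hse (hP.expander_unique hI hs h he hexp))
  refine ⟨⟨e, ⟨he, hdown⟩, fun s ⟨hs, hsl⟩ => ?_⟩, fun s hs hsl => hup s hs ?_⟩
  · by_contra hse
    exact absurd (hsl.unique (hup s hs hse)) (by omega)
  · rintro rfl
    exact hsl hdown

/-- For a component `J` of `P^∞_♯` of level `l ≥ 2`, there is a
unique `s ∈ S` with `lev(φ(s)J) = l - 1`, and every other `s ∈ S` has
`lev(φ(s)J) = l + 1`. -/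
theorem level_step (Γ : Type) [Group Γ] (S : Set Γ) (hfin : S.Finite)
    (hsym : ∀ s ∈ S, s⁻¹ ∈ S) (hgen : Subgroup.closure S = ⊤)
    (φ : RGp Γ) (P : Set S1) (hP : IsBP φ S P)
    (J : Set S1) (hJ : J ∈ compsSharp (PinfBP φ S P))
    (l : ℕ) (hl : 2 ≤ l) (hlev : HasLevel φ S P J l) :
    (∃! s, s ∈ S ∧ HasLevel φ S P (φ.toFun s '' J) (l - 1)) ∧
    ∀ s ∈ S, ¬ HasLevel φ S P (φ.toFun s '' J) (l - 1) →
      HasLevel φ S P (φ.toFun s '' J) (l + 1) :=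
  level_step_general Γ S hsym φ P hP J hJ l hl hlev
end
end

section
/- Let G be a group and φ ∈ R_G a homomorphism whose action on S¹ is minimal and which admits no φ(G)-invariant Borel probability measure. If U ∈ Homeo₊(S¹) commutes with φ(g) for every g ∈ G, then U^k = Id for some positive integer k. -/
noncomputable section

/-!
Lift `U` to `F : ℝ → ℝ`. If the rotation number of `F` is rational, `p / q`, then `U ^ q` has a
fixed point; as `U ^ q` commutes with the action, its fixed set is closed and invariant, hence
everything by minimality. If it is irrational, Ghys' theorem gives a monotone degree one `H` with
`H ∘ F = H + τ(F)`. Since the values `H (F ^ k 0 + m) = H 0 + k τ(F) + m` are dense, `H` is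
continuous and unique up to an additive constant. Lifts of the `φ g` commute with `F`, so they
change `H` by constants and preserve the Stieltjes measure `dH`; its projection to the circle is
an invariant probability measure.
-/

open CircleDeg1Lift Function Set MeasureTheory

lemma Homeomorph.coe_pow_eq_iterate (f : S1 ≃ₜ S1) (n : ℕ) : ⇑(f ^ n) = (⇑f)^[n] := by
  induction n with
  | zero => rfl
  | succ n ih => rw [pow_succ, iterate_succ, ← ih]; rfl

lemma IsOP.exists_lift {f : S1 ≃ₜ S1} (hf : IsOP f) :
    ∃ F : CircleDeg1Liftˣ, Continuous (F : ℝ → ℝ) ∧ Semiconj ((↑) : ℝ → S1) (F : ℝ → ℝ) f := by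
  obtain ⟨F₀, hmono, hF₀, hF₀f⟩ := hf
  let F₁ : CircleDeg1Lift := ⟨⟨F₀, hmono.monotone⟩, hF₀⟩
  have hsurj : Surjective F₁ := by
    intro y
    obtain ⟨s, hs⟩ := QuotientAddGroup.mk_surjective (f.symm y)
    have : ((F₀ s : ℝ) : S1) = y := by rw [hF₀f, hs, f.apply_symm_apply]
    obtain ⟨n, hn⟩ := QuotientAddGroup.eq.1 this
    simp only [zsmul_eq_mul, mul_one] at hn
    refine ⟨s + n, ?_⟩
    rw [F₁.map_add_int]
    change F₀ s + n = y
    linarith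
  obtain ⟨F, hF⟩ := isUnit_iff_bijective.2 ⟨hmono.injective, hsurj⟩
  exact ⟨F, hF ▸ (continuous_iff_surjective F₁).2 hsurj, hF ▸ hF₀f⟩

lemma exists_eq_add_int_of_coe_eq {A B : ℝ → ℝ} (hA : Continuous A) (hB : Continuous B)
    (h : ∀ x, (A x : S1) = B x) : ∃ n : ℤ, ∀ x, A x = B x + n := by
  obtain ⟨n, hn⟩ := QuotientAddGroup.eq.1 (h 0).symm
  simp only [zsmul_eq_mul, mul_one] at hn
  refine ⟨n, congrFun ((AddCircle.isCoveringMap_coe 1).eq_of_comp_eq hA (hB.add continuous_const)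
    (funext fun x => ?_) 0 (by linarith))⟩
  simp [h x]

lemma commute_lifts_of_commute {f g : S1 ≃ₜ S1} (hfg : Commute f g) {F G : CircleDeg1Liftˣ}
    (hFc : Continuous (F : ℝ → ℝ)) (hGc : Continuous (G : ℝ → ℝ))
    (hF : Semiconj ((↑) : ℝ → S1) (F : ℝ → ℝ) f) (hG : Semiconj ((↑) : ℝ → S1) (G : ℝ → ℝ) g) :
    Commute (F : CircleDeg1Lift) G := by
  obtain ⟨n, hn⟩ := exists_eq_add_int_of_coe_eq (hFc.comp hGc) (hGc.comp hFc) fun x => by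
    simp only [comp_apply, hF.eq, hG.eq]
    exact congrArg (fun h : S1 ≃ₜ S1 => h x) hfg.eq
  simp only [comp_apply] at hn
  -- `F ∘ G` and `G ∘ F` are conjugate, so the integer `n` by which they differ is their
  -- difference of translation numbers.
  have hn0 : (n : ℝ) = 0 := by
    let T : CircleDeg1Lift := translate (Multiplicative.ofAdd (n : ℝ))
    have hT : Commute T (G * F) :=
      commute_iff_commute.2 fun x => by simp [T, CircleDeg1Lift.translate_apply, map_int_add]
    have hFG : (F * G : CircleDeg1Lift) = T * (G * F) :=
      CircleDeg1Lift.ext fun x => by simp [T, CircleDeg1Lift.translate_apply, hn x, add_comm]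
    have hconj : translationNumber ((G : CircleDeg1Lift) * F) =
        translationNumber ((F : CircleDeg1Lift) * G) := by
      simpa [mul_assoc] using translationNumber_conj_eq G (F * G)
    have := translationNumber_mul_of_commute hT
    rw [← hFG, translationNumber_translate, hconj] at this
    linarith
  exact commute_iff_commute.2 fun x => by simpa [hn0] using hn x

lemma MinimalAct.eq_one_of_commute_of_apply_eq {G : Type} [Group G] {φ : RGp G}
    (hmin : MinimalAct φ) {V : S1 ≃ₜ S1} (hV : ∀ g, Commute V (φ.toFun g)) {x : S1}
    (hx : V x = x) : V = 1 := by
  have horbit : range (fun g => φ.toFun g x) ⊆ {y | V y = y} := by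
    rintro _ ⟨g, rfl⟩
    change (V * φ.toFun g) x = φ.toFun g x
    rw [(hV g).eq]
    exact congrArg (φ.toFun g) hx
  have hclosed : IsClosed {y | V y = y} := isClosed_eq V.continuous continuous_id
  exact Homeomorph.ext fun y => closure_minimal horbit hclosed (hmin x y)

lemma exists_apply_pow_eq_of_translationNumber_eq_rat {f : S1 ≃ₜ S1} {F : CircleDeg1Liftˣ}
    (hFc : Continuous (F : ℝ → ℝ)) (hF : Semiconj ((↑) : ℝ → S1) (F : ℝ → ℝ) f)
    {m : ℤ} {n : ℕ} (hn : 0 < n) (hτ : translationNumber (F : CircleDeg1Lift) = m / n) :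
    ∃ x, (f ^ n) x = x := by
  obtain ⟨y, hy⟩ := ((F : CircleDeg1Lift).translationNumber_eq_rat_iff hFc hn).1 hτ
  refine ⟨y, ?_⟩
  rw [Homeomorph.coe_pow_eq_iterate, ← (hF.iterate_right n).eq, ← coe_pow, hy]
  simp

section SemiconjRotation

variable {F : CircleDeg1Liftˣ} {a : ℝ}

lemma semiconj_units_zpow_apply {H : CircleDeg1Lift}
    (h : Semiconj H F (translate (Multiplicative.ofAdd a))) (k : ℤ) (y : ℝ) :
    H ((F ^ k : CircleDeg1Liftˣ) y) = H y + k * a := by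
  have := (semiconjBy_iff_semiconj.2 h).units_zpow_right k
  rw [translate_zpow] at this
  rw [semiconjBy_iff_semiconj.1 this y, CircleDeg1Lift.translate_apply, add_comm]

variable (hd : Dense (AddSubgroup.closure {a, 1} : Set ℝ))
include hd

lemma sub_map_zero_le_of_semiconj {H₁ H₂ : CircleDeg1Lift}
    (h₁ : Semiconj H₁ F (translate (Multiplicative.ofAdd a)))
    (h₂ : Semiconj H₂ F (translate (Multiplicative.ofAdd a))) (x : ℝ) :
    H₁ x - H₁ 0 ≤ H₂ x - H₂ 0 := by
  by_contra! hlt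
  obtain ⟨s, hs, hs₂, hs₁⟩ := hd.exists_between hlt
  obtain ⟨k, m, rfl⟩ := AddSubgroup.mem_closure_pair.1 hs
  have horbit : ∀ H : CircleDeg1Lift, Semiconj H F (translate (Multiplicative.ofAdd a)) →
      H ((F ^ k : CircleDeg1Liftˣ) 0 + m) - H 0 = k • a + m • (1 : ℝ) := fun H h => by
    rw [map_add_int, semiconj_units_zpow_apply h, zsmul_eq_mul, zsmul_eq_mul]
    ring
  rcases le_total ((F ^ k : CircleDeg1Liftˣ) 0 + m) x with hle | hle
  · linarith [horbit H₂ h₂, H₂.monotone hle]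
  · linarith [horbit H₁ h₁, H₁.monotone hle]

lemma exists_eq_add_of_semiconj {H₁ H₂ : CircleDeg1Lift}
    (h₁ : Semiconj H₁ F (translate (Multiplicative.ofAdd a)))
    (h₂ : Semiconj H₂ F (translate (Multiplicative.ofAdd a))) :
    ∃ c, ∀ x, H₁ x = H₂ x + c :=
  ⟨H₁ 0 - H₂ 0, fun x => by
    linarith [sub_map_zero_le_of_semiconj hd h₁ h₂ x, sub_map_zero_le_of_semiconj hd h₂ h₁ x]⟩

lemma continuous_of_semiconj {H : CircleDeg1Lift}
    (h : Semiconj H F (translate (Multiplicative.ofAdd a))) : Continuous H := by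
  refine H.monotone.continuous_of_denseRange <|
    Dense.mono ?_ ((Homeomorph.addLeft (H 0)).isDenseEmbedding.dense_image.2 hd)
  rintro _ ⟨_, hs, rfl⟩
  obtain ⟨k, m, rfl⟩ := AddSubgroup.mem_closure_pair.1 hs
  refine ⟨(F ^ k : CircleDeg1Liftˣ) 0 + m, ?_⟩
  simp only [map_add_int, semiconj_units_zpow_apply h, Homeomorph.coe_addLeft, zsmul_eq_mul]
  ring

lemma exists_map_apply_eq_add_of_commute {H : CircleDeg1Lift}
    (h : Semiconj H F (translate (Multiplicative.ofAdd a))) {G : CircleDeg1Lift}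
    (hFG : Commute (F : CircleDeg1Lift) G) : ∃ c, ∀ x, H (G x) = H x + c :=
  exists_eq_add_of_semiconj (H₁ := H * G) hd
    (fun x => by rw [mul_apply, ← (commute_iff_commute.1 hFG).eq]; exact h (G x)) h

end SemiconjRotation

lemma StieltjesFunction.map_measure_of_apply_eq_add (f : StieltjesFunction ℝ) (e : ℝ ≃o ℝ)
    {c : ℝ} (h : ∀ x, f (e x) = f x + c) : Measure.map e f.measure = f.measure := by
  refine (Measure.ext_of_Ioc _ _ fun a b _ => ?_).symm
  rw [Measure.map_apply e.continuous.measurable measurableSet_Ioc, e.preimage_Ioc,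
    f.measure_Ioc, f.measure_Ioc]
  have ha := h (e.symm a)
  have hb := h (e.symm b)
  rw [OrderIso.apply_symm_apply] at ha hb
  congr 1
  linarith

namespace CircleDeg1Lift

variable (H : CircleDeg1Lift) (hH : Continuous H)

def stieltjesFunction : StieltjesFunction ℝ :=
  ⟨H, H.monotone, fun _ => hH.continuousWithinAt⟩

lemma measure_stieltjesFunction_Ioc_zero_one :
    (H.stieltjesFunction hH).measure (Ioc 0 1) = 1 := by
  rw [StieltjesFunction.measure_Ioc]
  change ENNReal.ofReal (H 1 - H 0) = 1
  rw [← zero_add (1 : ℝ), H.map_add_one]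
  simp

lemma vaddInvariantMeasure_stieltjesFunction :
    VAddInvariantMeasure (AddSubgroup.zmultiples (1 : ℝ)) ℝ (H.stieltjesFunction hH).measure := by
  refine ⟨fun c s hs => ?_⟩
  obtain ⟨n, hn⟩ := c.2
  have hc : ∀ x, H.stieltjesFunction hH (OrderIso.addLeft (c : ℝ) x) =
      H.stieltjesFunction hH x + c := fun x => by
    rw [← hn]
    change H (n • (1 : ℝ) + x) = H x + n • (1 : ℝ)
    rw [zsmul_one, H.map_int_add, add_comm]
  conv_rhs => rw [← (H.stieltjesFunction hH).map_measure_of_apply_eq_add _ hc]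
  rw [Measure.map_apply (OrderIso.addLeft (c : ℝ)).continuous.measurable hs]
  rfl

end CircleDeg1Lift

lemma preimage_coe_vadd_zmultiples_one (A : Set S1) (g : AddSubgroup.zmultiples (1 : ℝ)) :
    (fun x => g +ᵥ x) ⁻¹' ((↑) ⁻¹' A : Set ℝ) = (↑) ⁻¹' A := by
  ext x
  have : ((g + x : ℝ) : S1) = x := QuotientAddGroup.eq.2 (by simp)
  simp [AddSubgroup.vadd_def, this]

lemma map_map_restrict_Ioc_eq {ν : Measure ℝ}
    [VAddInvariantMeasure (AddSubgroup.zmultiples (1 : ℝ)) ℝ ν] {f : S1 ≃ₜ S1}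
    {G : CircleDeg1Liftˣ} (hG : Semiconj ((↑) : ℝ → S1) (G : ℝ → ℝ) f)
    (hν : Measure.map (G : ℝ → ℝ) ν = ν) :
    Measure.map f (Measure.map ((↑) : ℝ → S1) (ν.restrict (Ioc 0 1))) =
      Measure.map ((↑) : ℝ → S1) (ν.restrict (Ioc 0 1)) := by
  have hπ : Measurable ((↑) : ℝ → S1) := AddCircle.measurable_mk'
  have hGm : Measurable (G : ℝ → ℝ) := (G : CircleDeg1Lift).monotone.measurable
  ext A hA
  have hB := hπ hA
  rw [Measure.map_apply f.measurable hA, Measure.map_apply hπ (f.measurable hA),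
    Measure.map_apply hπ hA, Measure.restrict_apply (hπ (f.measurable hA)),
    Measure.restrict_apply hB]
  have hpre : (↑) ⁻¹' (f ⁻¹' A) = (G : ℝ → ℝ) ⁻¹' ((↑) ⁻¹' A) := by
    ext x
    simp [hG.eq x]
  have hIoc : (G : ℝ → ℝ) ⁻¹' Ioc (G 0) (G 0 + 1) = Ioc 0 1 := by
    rw [← (G : CircleDeg1Lift).map_add_one, zero_add, ← coe_toOrderIso, OrderIso.preimage_Ioc,
      OrderIso.symm_apply_apply, OrderIso.symm_apply_apply]
  have hfund (t : ℝ) := isAddFundamentalDomain_Ioc one_pos t ν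
  calc ν ((↑) ⁻¹' (f ⁻¹' A) ∩ Ioc 0 1)
      = ν ((G : ℝ → ℝ) ⁻¹' ((↑) ⁻¹' A ∩ Ioc (G 0) (G 0 + 1))) := by
        rw [preimage_inter, hpre, hIoc]
    _ = ν ((↑) ⁻¹' A ∩ Ioc (G 0) (G 0 + 1)) := by
        rw [← Measure.map_apply hGm (hB.inter measurableSet_Ioc), hν]
    _ = ν ((↑) ⁻¹' A ∩ Ioc 0 1) := by
        simpa using (hfund _).measure_set_eq (hfund 0) hB (preimage_coe_vadd_zmultiples_one A)

lemma isType0_of_irrational_of_commute {G : Type} [Group G] (φ : RGp G) {F : CircleDeg1Liftˣ}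
    (hτ : Irrational (translationNumber (F : CircleDeg1Lift)))
    (hlift : ∀ g, ∃ Gg : CircleDeg1Liftˣ, Commute (F : CircleDeg1Lift) Gg ∧
      Semiconj ((↑) : ℝ → S1) (Gg : ℝ → ℝ) (φ.toFun g)) :
    IsType0 φ := by
  have hd : Dense (AddSubgroup.closure {translationNumber (F : CircleDeg1Lift), 1} : Set ℝ) :=
    dense_addSubgroupClosure_pair_iff.2 (by simpa using hτ)
  obtain ⟨H, hH⟩ := units_semiconj_of_translationNumber_eq
    (f₂ := translate (Multiplicative.ofAdd (translationNumber (F : CircleDeg1Lift))))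
    (translationNumber_translate _).symm
  have hHc := continuous_of_semiconj hd hH
  let ν := (H.stieltjesFunction hHc).measure
  have := H.vaddInvariantMeasure_stieltjesFunction hHc
  have : IsProbabilityMeasure (ν.restrict (Ioc 0 1)) :=
    ⟨by rw [Measure.restrict_apply_univ, H.measure_stieltjesFunction_Ioc_zero_one]⟩
  refine ⟨Measure.map (↑) (ν.restrict (Ioc 0 1)),
    Measure.isProbabilityMeasure_map AddCircle.measurable_mk'.aemeasurable, fun g => ?_⟩
  obtain ⟨Gg, hFG, hGg⟩ := hlift g
  obtain ⟨c, hc⟩ := exists_map_apply_eq_add_of_commute hd hH hFG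
  exact map_map_restrict_Ioc_eq hGg
    ((H.stieltjesFunction hHc).map_measure_of_apply_eq_add (toOrderIso Gg) hc)

/-- If the action of `φ(G)` is minimal and has no invariant
probability measure, then any orientation preserving homeomorphism commuting with
the action has finite order. -/
theorem commuting_homeo_finite_order (G : Type) [Group G] (φ : RGp G)
    (hmin : MinimalAct φ) (hnm : ¬ IsType0 φ)
    (U : S1 ≃ₜ S1) (hU : IsOP U) (hcomm : ∀ g, U * φ.toFun g = φ.toFun g * U) :
    ∃ k : ℕ, 0 < k ∧ U ^ k = 1 := by
  obtain ⟨F, hFc, hFU⟩ := hU.exists_lift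
  by_cases hτ : Irrational (translationNumber (F : CircleDeg1Lift))
  · refine absurd (isType0_of_irrational_of_commute φ hτ fun g => ?_) hnm
    obtain ⟨Gg, hGc, hGg⟩ := (φ.op g).exists_lift
    exact ⟨Gg, commute_lifts_of_commute (hcomm g) hFc hGc hFU hGg, hGg⟩
  · obtain ⟨q, hq⟩ := not_not.1 hτ
    obtain ⟨x, hx⟩ := exists_apply_pow_eq_of_translationNumber_eq_rat hFc hFU q.pos
      (by rw [← hq, Rat.cast_def])
    exact ⟨q.den, q.pos,
      hmin.eq_one_of_commute_of_apply_eq (fun g => Commute.pow_left (hcomm g) _) hx⟩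
end
end
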